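/- arXiv:1506.01213 — 8 statements merged into one kernel-verified Lean document; each statement's English description precedes it below -/
import Mathlib

section
/- Let σ be a countable set and let p, q be distinct probability mass functions on σ. Then the infinite product measures p^{⊗ℕ} and q^{⊗ℕ} on σ^ℕ are mutually singular. -/
/-!
The cylinder conditions determine `μp` and `μq` on the initial cylinders, a π-system generating
the product σ-algebra because `σ` is countable, so `μp` and `μq` are the i.i.d. products of `p`
and `q`. Choose a set `A` with `p A ≠ q A`. By the strong law of large numbers the frequency with
which a sequence visits `A` tends to `p A` almost surely under `p^⊗ℕ` and to `q A` almost surely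
under `q^⊗ℕ`, so the set of sequences along which it tends to `p A` separates the two measures.
-/

open MeasureTheory ProbabilityTheory Filter Topology Finset

section InitialCylinders

variable {σ : Type*}

def initialCylinder {k : ℕ} (ξ : Fin k → σ) : Set (ℕ → σ) :=
  {x | ∀ i : Fin k, x i = ξ i}

variable (σ) in
def initialCylinders : Set (Set (ℕ → σ)) :=
  {S | ∃ (k : ℕ) (ξ : Fin k → σ), initialCylinder ξ = S}

lemma initialCylinder_subset_of_le {k l : ℕ} (hkl : k ≤ l) {ξ : Fin k → σ} {η : Fin l → σ}
    (hξη : (initialCylinder ξ ∩ initialCylinder η).Nonempty) :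
    initialCylinder η ⊆ initialCylinder ξ := by
  obtain ⟨x, hxξ, hxη⟩ := hξη
  intro y hy i
  rw [← hxξ i, hy ⟨i, i.2.trans_le hkl⟩, hxη ⟨i, i.2.trans_le hkl⟩]

lemma isPiSystem_initialCylinders : IsPiSystem (initialCylinders σ) := by
  rintro _ ⟨k, ξ, rfl⟩ _ ⟨l, η, rfl⟩ hne
  rcases le_total k l with hkl | hlk
  · rw [Set.inter_eq_right.mpr (initialCylinder_subset_of_le hkl hne)]
    exact ⟨l, η, rfl⟩
  · rw [Set.inter_comm] at hne
    rw [Set.inter_eq_left.mpr (initialCylinder_subset_of_le hlk hne)]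
    exact ⟨k, ξ, rfl⟩

lemma initialCylinder_eq_preimage {k : ℕ} (ξ : Fin k → σ) :
    initialCylinder ξ = (fun x (i : Fin k) ↦ x i) ⁻¹' {ξ} := by
  ext x
  simp [initialCylinder, funext_iff]

lemma eval_preimage_singleton_eq_biUnion_initialCylinder (i : ℕ) (c : σ) :
    (fun x : ℕ → σ ↦ x i) ⁻¹' {c} =
      ⋃ ξ ∈ {ξ : Fin (i + 1) → σ | ξ (Fin.last i) = c}, initialCylinder ξ := by
  ext x
  simp only [Set.mem_preimage, Set.mem_singleton_iff, Set.mem_iUnion, Set.mem_ofPred_eq,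
    exists_prop]
  refine ⟨fun hx ↦ ⟨fun j ↦ x j, hx, fun _ ↦ rfl⟩, ?_⟩
  rintro ⟨ξ, rfl, hξ⟩
  exact hξ (Fin.last i)

variable [MeasurableSpace σ]

lemma measurableSet_initialCylinder [MeasurableSingletonClass σ] {k : ℕ} (ξ : Fin k → σ) :
    MeasurableSet (initialCylinder ξ) := by
  rw [initialCylinder_eq_preimage]
  exact measurableSet_singleton ξ |>.preimage (by fun_prop)

lemma generateFrom_initialCylinders [Countable σ] [MeasurableSingletonClass σ] :
    MeasurableSpace.generateFrom (initialCylinders σ) = MeasurableSpace.pi := by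
  refine le_antisymm ?_ (iSup_le fun i ↦ Measurable.comap_le ?_)
  · refine MeasurableSpace.generateFrom_le ?_
    rintro _ ⟨k, ξ, rfl⟩
    exact measurableSet_initialCylinder ξ
  · refine @measurable_to_countable' _ _ _ _ (_) _ fun c ↦ ?_
    rw [eval_preimage_singleton_eq_biUnion_initialCylinder]
    exact .biUnion (Set.to_countable _) fun ξ _ ↦ .basic _ ⟨_, ξ, rfl⟩

lemma infinitePi_initialCylinder (ν : Measure σ) [IsProbabilityMeasure ν]
    [MeasurableSingletonClass σ] {k : ℕ} (ξ : Fin k → σ) :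
    Measure.infinitePi (fun _ : ℕ ↦ ν) (initialCylinder ξ) = ∏ i, ν {ξ i} := by
  rw [initialCylinder_eq_preimage, ← Measure.map_apply (by fun_prop) (measurableSet_singleton ξ),
    Measure.map_infinitePi_infinitePi_of_inj Fin.val_injective,
    Measure.infinitePi_singleton_of_fintype]

theorem eq_infinitePi_of_initialCylinder [Countable σ] [MeasurableSingletonClass σ]
    (ν : Measure σ) [IsProbabilityMeasure ν] {μ : Measure (ℕ → σ)}
    (hμ : ∀ (k : ℕ) (ξ : Fin k → σ), μ (initialCylinder ξ) = ∏ i, ν {ξ i}) :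
    μ = Measure.infinitePi (fun _ ↦ ν) := by
  refine (ext_of_generate_finite _ generateFrom_initialCylinders.symm isPiSystem_initialCylinders
    ?_ ?_).symm
  · rintro _ ⟨k, ξ, rfl⟩
    rw [hμ, infinitePi_initialCylinder]
  · simpa [initialCylinder] using (hμ 0 Fin.elim0).symm

end InitialCylinders

section StrongLaw

variable {α : Type*} [MeasurableSpace α]

noncomputable def empiricalFrequency (A : Set α) (n : ℕ) (ω : ℕ → α) : ℝ :=
  (∑ i ∈ range n, A.indicator 1 (ω i)) / n

lemma ae_tendsto_empiricalFrequency_infinitePi (ν : Measure α) [IsProbabilityMeasure ν]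
    {A : Set α} (hA : MeasurableSet A) :
    ∀ᵐ ω ∂Measure.infinitePi (fun _ : ℕ ↦ ν),
      Tendsto (empiricalFrequency A · ω) atTop (𝓝 (ν.real A)) := by
  have hf : Measurable (A.indicator (1 : α → ℝ)) := measurable_one.indicator hA
  have hlaw (i : ℕ) := measurePreserving_eval_infinitePi (fun _ : ℕ ↦ ν) i
  have hmean : ∫ ω, A.indicator 1 (ω 0) ∂Measure.infinitePi (fun _ : ℕ ↦ ν) = ν.real A := by
    rw [← integral_map (hlaw 0).aemeasurable hf.aestronglyMeasurable, (hlaw 0).map_eq,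
      integral_indicator_one hA]
  rw [← hmean]
  refine strong_law_ae_real (μ := Measure.infinitePi (fun _ : ℕ ↦ ν))
    (fun i ω ↦ A.indicator 1 (ω i)) ?_ ?_ fun i ↦ ?_
  · exact (hlaw 0).integrable_comp_of_integrable ((integrable_const 1).indicator hA)
  · exact fun i j hij ↦ (iIndepFun_infinitePi fun _ ↦ hf).indepFun hij
  · exact IdentDistrib.comp ⟨(hlaw i).aemeasurable, (hlaw 0).aemeasurable,
      by rw [(hlaw i).map_eq, (hlaw 0).map_eq]⟩ hf

theorem mutuallySingular_infinitePi_of_ne {ν ν' : Measure α} [IsProbabilityMeasure ν]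
    [IsProbabilityMeasure ν'] (hνν' : ν ≠ ν') :
    Measure.infinitePi (fun _ : ℕ ↦ ν) ⟂ₘ Measure.infinitePi (fun _ : ℕ ↦ ν') := by
  obtain ⟨A, hA, hνA⟩ : ∃ A, MeasurableSet A ∧ ν A ≠ ν' A := by
    by_contra! h
    exact hνν' (Measure.ext h)
  have hνA' : ν.real A ≠ ν'.real A := fun h ↦
    hνA ((ENNReal.toReal_eq_toReal_iff' (measure_ne_top _ _) (measure_ne_top _ _)).mp h)
  set T := {ω : ℕ → α | Tendsto (empiricalFrequency A · ω) atTop (𝓝 (ν.real A))}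
  refine Measure.MutuallySingular.mk (s := Tᶜ) (t := T) ?_ ?_ (by simp)
  · exact ae_tendsto_empiricalFrequency_infinitePi ν hA
  · exact measure_mono_null (fun ω hω hω' ↦ hνA' (tendsto_nhds_unique hω hω'))
      (ae_tendsto_empiricalFrequency_infinitePi ν' hA)

end StrongLaw

theorem PMF.eq_infinitePi_of_initialCylinder {σ : Type*} [Countable σ] [MeasurableSpace σ]
    [MeasurableSingletonClass σ] (p : PMF σ) {μ : Measure (ℕ → σ)}
    (hμ : ∀ (k : ℕ) (ξ : Fin k → σ), μ (initialCylinder ξ) = ∏ i, p (ξ i)) :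
    μ = Measure.infinitePi (fun _ ↦ p.toMeasure) :=
  _root_.eq_infinitePi_of_initialCylinder p.toMeasure fun k ξ ↦ by
    simp only [PMF.toMeasure_apply_singleton _ _ (measurableSet_singleton _), hμ]

theorem product_measures_mutuallySingular_general {σ : Type*} [Countable σ]
    [MeasurableSpace σ] [DiscreteMeasurableSpace σ]
    (p q : PMF σ) (hpq : p ≠ q)
    (μp μq : Measure (ℕ → σ))
    (hμp : ∀ (k : ℕ) (ξs : Fin k → σ),
      μp {x | ∀ i : Fin k, x (i : ℕ) = ξs i} = ∏ i, p (ξs i))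
    (hμq : ∀ (k : ℕ) (ξs : Fin k → σ),
      μq {x | ∀ i : Fin k, x (i : ℕ) = ξs i} = ∏ i, q (ξs i)) :
    μp ⟂ₘ μq := by
  rw [p.eq_infinitePi_of_initialCylinder hμp, q.eq_infinitePi_of_initialCylinder hμq]
  exact mutuallySingular_infinitePi_of_ne (PMF.toMeasure_injective.ne hpq)

/-- If `p ≠ q` are probability mass functions on a countable set `σ`, then the
i.i.d. product measures `p^⊗ℕ` and `q^⊗ℕ` on `σ^ℕ` (characterized by their values on
cylinder sets) are mutually singular. -/
theorem product_measures_mutuallySingular {σ : Type*} [Countable σ]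
    [MeasurableSpace σ] [DiscreteMeasurableSpace σ]
    (p q : PMF σ) (hpq : p ≠ q)
    (μp μq : Measure (ℕ → σ)) [IsProbabilityMeasure μp] [IsProbabilityMeasure μq]
    (hμp : ∀ (k : ℕ) (ξs : Fin k → σ),
      μp {x | ∀ i : Fin k, x (i : ℕ) = ξs i} = ∏ i, p (ξs i))
    (hμq : ∀ (k : ℕ) (ξs : Fin k → σ),
      μq {x | ∀ i : Fin k, x (i : ℕ) = ξs i} = ∏ i, q (ξs i)) :
    μp ⟂ₘ μq :=
  product_measures_mutuallySingular_general p q hpq μp μq hμp hμq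
end

section
/- Let σ be a finite set, p a probability mass function on σ, μ = p^{⊗ℕ}, and let U ⊂ M(σ) be an open neighborhood of p in the simplex of probability vectors (with the ℓ¹ or euclidean metric). Then there exist constants C > 0 and a ∈ (0,1) such that for all n, μ({x : the empirical distribution f^{(n)}(x) ∉ U}) ≤ C·aⁿ. -/
open MeasureTheory
open scoped BigOperators

/-- Empirical frequency of the outcome `ξ` among the first `n` entries of `x : ℕ → σ`. -/
noncomputable def empFreq {σ : Type*} [DecidableEq σ] (n : ℕ) (x : ℕ → σ) (ξ : σ) : ℝ :=
  ((Finset.range n).filter (fun j => x j = ξ)).card / n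

/-!
The cylinder probabilities say that the first `n` coordinates of `x` are distributed as `p^⊗n`.
If the empirical distribution leaves `U`, it is `ε`-far from `p` in some coordinate `ξ`, for an
`ε` with `ball p ε ⊆ U`; that is, the sum of the `n` i.i.d. centred indicators of `ξ` has absolute
value at least `n ε`. Hoeffding's inequality bounds the probability of this by `2 exp (-2 n ε²)`,
and a union bound over `ξ ∈ σ` gives `C = 2 |σ|` and `a = exp (-2 ε²)`.
-/

open ProbabilityTheory

lemma natCast_mul_le_abs_sub_mul {c q ε : ℝ} {n : ℕ} (h : ε ≤ |c / n - q|) :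
    n * ε ≤ |c - n * q| := by
  rcases eq_or_ne (n : ℝ) 0 with hn | hn
  · simp [hn]
  · calc (n : ℝ) * ε ≤ n * |c / n - q| := by gcongr
      _ = |n * (c / n - q)| := by rw [abs_mul, Nat.abs_cast]
      _ = |c - n * q| := by rw [mul_sub, mul_div_cancel₀ _ hn]

section Hoeffding

variable {Ω ι : Type*} [MeasurableSpace Ω] [Fintype ι] {ρ : Measure Ω} [IsProbabilityMeasure ρ]
  {f : Ω → ℝ}

lemma measureReal_sum_sub_integral_ge_le (hf : Measurable f) (hf01 : ∀ ω, f ω ∈ Set.Icc 0 1)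
    {ε : ℝ} (hε : 0 ≤ ε) :
    (Measure.pi fun _ : ι => ρ).real {w | Fintype.card ι * ε ≤ ∑ i, (f (w i) - ∫ ω, f ω ∂ρ)}
      ≤ Real.exp (-2 * Fintype.card ι * ε ^ 2) := by
  have h_indep : iIndepFun (fun i (w : ι → Ω) => f (w i) - ∫ ω, f ω ∂ρ)
      (Measure.pi fun _ => ρ) :=
    (iIndepFun_pi fun _ => hf.aemeasurable).comp (fun _ y => y - ∫ ω, f ω ∂ρ)
      fun _ => measurable_sub_const _
  have h_subG (i : ι) : HasSubgaussianMGF (fun w : ι → Ω => f (w i) - ∫ ω, f ω ∂ρ)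
      ((‖(1 : ℝ) - 0‖₊ / 2) ^ 2) (Measure.pi fun _ => ρ) := by
    have := hasSubgaussianMGF_of_mem_Icc (μ := Measure.pi fun _ : ι => ρ)
      (X := fun w : ι → Ω => f (w i))
      (hf.comp (measurable_pi_apply i)).aemeasurable (ae_of_all _ fun w => hf01 (w i))
    rwa [integral_comp_eval hf.aestronglyMeasurable] at this
  refine (HasSubgaussianMGF.measure_sum_ge_le_of_iIndepFun h_indep (s := Finset.univ)
    (fun i _ => h_subG i) (ε := Fintype.card ι * ε) (by positivity)).trans_eq ?_
  congr 1
  simp only [sub_zero, nnnorm_one, one_div, inv_pow, Finset.sum_const, Finset.card_univ,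
    nsmul_eq_mul, NNReal.coe_mul, NNReal.coe_natCast, NNReal.coe_inv, NNReal.coe_pow,
    NNReal.coe_ofNat, neg_mul]
  field_simp

lemma measureReal_abs_sum_sub_integral_ge_le (hf : Measurable f)
    (hf01 : ∀ ω, f ω ∈ Set.Icc 0 1) {ε : ℝ} (hε : 0 ≤ ε) :
    (Measure.pi fun _ : ι => ρ).real {w | Fintype.card ι * ε ≤ |∑ i, (f (w i) - ∫ ω, f ω ∂ρ)|}
      ≤ 2 * Real.exp (-2 * Fintype.card ι * ε ^ 2) := by
  have hg01 (ω : Ω) : 1 - f ω ∈ Set.Icc 0 1 := by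
    constructor <;> linarith [(hf01 ω).1, (hf01 ω).2]
  have h_int : ∫ ω, (1 - f ω) ∂ρ = 1 - ∫ ω, f ω ∂ρ := by
    rw [integral_sub (integrable_const 1)
      (Integrable.of_mem_Icc 0 1 hf.aemeasurable (ae_of_all _ hf01))]
    simp
  -- the lower tail of `f` is the upper tail of `1 - f`
  have h_tails : {w : ι → Ω | Fintype.card ι * ε ≤ |∑ i, (f (w i) - ∫ ω, f ω ∂ρ)|}
      ⊆ {w | Fintype.card ι * ε ≤ ∑ i, (f (w i) - ∫ ω, f ω ∂ρ)}
        ∪ {w | Fintype.card ι * ε ≤ ∑ i, ((1 - f (w i)) - ∫ ω, (1 - f ω) ∂ρ)} := by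
    intro w hw
    have h_neg : ∑ i, ((1 - f (w i)) - (1 - ∫ ω, f ω ∂ρ)) = -∑ i, (f (w i) - ∫ ω, f ω ∂ρ) := by
      rw [← Finset.sum_neg_distrib]
      exact Finset.sum_congr rfl fun i _ => by ring
    rcases le_abs'.mp (Set.mem_ofPred.mp hw) with h | h
    · right
      simp only [Set.mem_ofPred_eq, h_int, h_neg]
      linarith
    · exact Or.inl h
  calc _ ≤ _ := measureReal_mono h_tails
    _ ≤ _ := measureReal_union_le _ _
    _ ≤ _ := by
      rw [two_mul]
      exact add_le_add (measureReal_sum_sub_integral_ge_le hf hf01 hε)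
        (measureReal_sum_sub_integral_ge_le (measurable_const.sub hf) hg01 hε)

end Hoeffding

section Frequencies

variable {σ : Type*}

lemma map_firstCoords_eq_pi [MeasurableSpace σ] [Countable σ] [MeasurableSingletonClass σ]
    (P : PMF σ) {μ : Measure (ℕ → σ)}
    (hμ : ∀ (n : ℕ) (w : Fin n → σ), μ {x | ∀ i : Fin n, x i = w i} = ∏ i, P (w i)) (n : ℕ) :
    μ.map (fun x (i : Fin n) => x i) = Measure.pi fun _ => P.toMeasure := by
  refine Measure.ext_iff_singleton.mpr fun w => ?_
  rw [Measure.map_apply (by fun_prop) (measurableSet_singleton w), Measure.pi_singleton]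
  simp only [PMF.toMeasure_apply_singleton _ _ (measurableSet_singleton _), ← hμ n w,
    Set.preimage, Set.mem_singleton_iff, funext_iff]

variable [DecidableEq σ]

lemma integral_boole_eq_measureReal [MeasurableSpace σ] [MeasurableSingletonClass σ]
    (ρ : Measure σ) (ξ : σ) :
    ∫ ζ, (if ζ = ξ then (1 : ℝ) else 0) ∂ρ = ρ.real {ξ} := by
  rw [← integral_indicator_one (measurableSet_singleton ξ)]
  simp only [Set.indicator_apply, Set.mem_singleton_iff, Pi.one_apply]

lemma sum_boole_sub_eq_card_sub {ι : Type*} [Fintype ι] (w : ι → σ) (ξ : σ) (q : ℝ) :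
    ∑ i, ((if w i = ξ then 1 else 0) - q)
      = (Finset.univ.filter fun i => w i = ξ).card - Fintype.card ι * q := by
  simp [Finset.sum_sub_distrib, Finset.sum_boole]

lemma empFreq_eq_card_div (n : ℕ) (x : ℕ → σ) (ξ : σ) :
    empFreq n x ξ = (Finset.univ.filter fun i : Fin n => x i = ξ).card / n := by
  rw [empFreq, Finset.card_filter, Finset.card_filter,
    Fin.sum_univ_eq_sum_range (fun j => if x j = ξ then 1 else 0)]

lemma exists_le_abs_card_sub_of_empFreq_notMem [Fintype σ] {p : σ → ℝ} {U : Set (σ → ℝ)}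
    {ε : ℝ} (hε : 0 < ε) (hball : Metric.ball p ε ⊆ U) {n : ℕ} {x : ℕ → σ}
    (hx : (fun ξ => empFreq n x ξ) ∉ U) :
    ∃ ξ, n * ε ≤ |(Finset.univ.filter fun i : Fin n => x i = ξ).card - n * p ξ| := by
  have hx' : (fun ξ => empFreq n x ξ) ∉ Metric.ball p ε := fun h => hx (hball h)
  rw [Metric.mem_ball, dist_pi_lt_iff hε] at hx'
  push Not at hx'
  obtain ⟨ξ, hξ⟩ := hx'
  rw [Real.dist_eq, empFreq_eq_card_div] at hξ
  exact ⟨ξ, natCast_mul_le_abs_sub_mul hξ⟩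

end Frequencies

theorem sanov_type_bound_general {σ : Type*} [Fintype σ] [DecidableEq σ]
    [MeasurableSpace σ] [DiscreteMeasurableSpace σ]
    (p : σ → ℝ) (hp : ∀ ξ, 0 ≤ p ξ) (hp1 : ∑ ξ, p ξ = 1)
    (μ : Measure (ℕ → σ))
    (hμ : ∀ (k : ℕ) (ξs : Fin k → σ),
      μ {x | ∀ i : Fin k, x (i : ℕ) = ξs i} = ∏ i, ENNReal.ofReal (p (ξs i)))
    (U : Set (σ → ℝ)) (hU : IsOpen U) (hpU : p ∈ U) :
    ∃ C > 0, ∃ a ∈ Set.Ioo (0 : ℝ) 1, ∀ n : ℕ,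
      μ {x | (fun ξ => empFreq n x ξ) ∉ U} ≤ ENNReal.ofReal (C * a ^ n) := by
  obtain ⟨ε, hε, hball⟩ := Metric.isOpen_iff.mp hU p hpU
  have : Nonempty σ := Finset.univ_nonempty_iff.mp
    (Finset.nonempty_of_sum_ne_zero (hp1.trans_ne one_ne_zero))
  let P : PMF σ := PMF.ofFintype (fun ξ => ENNReal.ofReal (p ξ)) (by
    rw [← ENNReal.ofReal_sum_of_nonneg fun ξ _ => hp ξ, hp1, ENNReal.ofReal_one])
  have hP (ξ : σ) : P.toMeasure.real {ξ} = p ξ := by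
    simp [measureReal_def, P, hp ξ]
  refine ⟨2 * Fintype.card σ, by positivity, Real.exp (-2 * ε ^ 2),
    ⟨Real.exp_pos _, Real.exp_lt_one_iff.mpr (by nlinarith)⟩, fun n => ?_⟩
  let dev (ξ : σ) : Set (Fin n → σ) := {w | Fintype.card (Fin n) * ε
      ≤ |∑ i, ((if w i = ξ then 1 else 0) - ∫ ζ, (if ζ = ξ then (1 : ℝ) else 0) ∂P.toMeasure)|}
  have h_bad : {x | (fun ξ => empFreq n x ξ) ∉ U} ⊆ (fun x (i : Fin n) => x i) ⁻¹' ⋃ ξ, dev ξ := by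
    intro x hx
    obtain ⟨ξ, hξ⟩ := exists_le_abs_card_sub_of_empFreq_notMem hε hball hx
    refine Set.mem_iUnion.mpr ⟨ξ, ?_⟩
    simpa only [dev, Set.mem_ofPred_eq, integral_boole_eq_measureReal, hP,
      sum_boole_sub_eq_card_sub, Fintype.card_fin] using hξ
  calc μ {x | (fun ξ => empFreq n x ξ) ∉ U}
      ≤ μ.map (fun x (i : Fin n) => x i) (⋃ ξ, dev ξ) :=
        (measure_mono h_bad).trans
          (Measure.le_map_apply (by fun_prop : Measurable _).aemeasurable _)
    _ = ENNReal.ofReal ((Measure.pi fun _ => P.toMeasure).real (⋃ ξ, dev ξ)) := by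
        rw [map_firstCoords_eq_pi P (fun k w => by simp [P, hμ]), ofReal_measureReal]
    _ ≤ ENNReal.ofReal (∑ _ξ : σ, 2 * Real.exp (-2 * Fintype.card (Fin n) * ε ^ 2)) :=
        ENNReal.ofReal_le_ofReal <| (measureReal_iUnion_fintype_le _).trans <|
          Finset.sum_le_sum fun ξ _ => measureReal_abs_sum_sub_integral_ge_le
            (f := fun ζ => if ζ = ξ then 1 else 0) (measurable_of_finite _)
            (fun ζ => by split_ifs <;> simp) hε.le
    _ = ENNReal.ofReal (2 * Fintype.card σ * Real.exp (-2 * ε ^ 2) ^ n) := by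
        rw [Finset.sum_const, Finset.card_univ, nsmul_eq_mul, Fintype.card_fin,
          ← Real.exp_nat_mul]
        ring_nf

/-- Let `σ` be finite, `p` a probability mass function on `σ`, `μ = p^⊗ℕ` the
i.i.d. product measure on `σ^ℕ` (characterized by its cylinder probabilities), and `U` an
open neighborhood of `p` in the space of probability vectors `σ → ℝ`. Then there exist
`C > 0` and `a ∈ (0,1)` such that for every `n`,
`μ {x | empirical distribution f⁽ⁿ⁾(x) ∉ U} ≤ C·aⁿ`. -/
theorem sanov_type_bound {σ : Type*} [Fintype σ] [DecidableEq σ]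
    [MeasurableSpace σ] [DiscreteMeasurableSpace σ]
    (p : σ → ℝ) (hp : ∀ ξ, 0 ≤ p ξ) (hp1 : ∑ ξ, p ξ = 1)
    (μ : Measure (ℕ → σ)) [IsProbabilityMeasure μ]
    (hμ : ∀ (k : ℕ) (ξs : Fin k → σ),
      μ {x | ∀ i : Fin k, x (i : ℕ) = ξs i} = ∏ i, ENNReal.ofReal (p (ξs i)))
    (U : Set (σ → ℝ)) (hU : IsOpen U) (hpU : p ∈ U) :
    ∃ C > 0, ∃ a ∈ Set.Ioo (0 : ℝ) 1, ∀ n : ℕ,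
      μ {x | (fun ξ => empFreq n x ξ) ∉ U} ≤ ENNReal.ofReal (C * a ^ n) :=
  sanov_type_bound_general p hp hp1 μ hμ U hU hpU
end

section
/- Let σ, N be finite sets and for each ν∈N let p_ν be a probability mass function on σ, with p_ν ≠ p_{ν'} whenever ν ≠ ν'. Let w : N → [0,1] with Σ_ν w(ν)=1 and let μ = Σ_ν w(ν)·p_ν^{⊗ℕ} be the mixture of product measures on σ^ℕ. Then there exist pairwise disjoint measurable sets (Ξ_ν)_{ν∈N} in σ^ℕ such that p_ν^{⊗ℕ}(Ξ_{ν'}) = δ_{ν,ν'}, and consequently μ(Ξ_ν) = w(ν) for all ν. -/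
/-!
Under `p_ν^⊗ℕ` the coordinates are i.i.d. with law `p_ν`: the cylinder probabilities on initial
segments determine all finite-dimensional marginals, which factor. The strong law of large
numbers, applied to the indicators of `x i = ξ`, then says that almost every sequence has
empirical distribution `p_ν`. So `Ξ_ν`, the set of sequences whose empirical distribution tends
to `p_ν`, has full `p_ν^⊗ℕ`-measure, and these sets are disjoint because a limit is unique and
the `p_ν` are distinct. Hence `p_ν^⊗ℕ (Ξ_ν') = δ_{ν,ν'}`, and evaluating the mixture is linear.
-/

open MeasureTheory ProbabilityTheory Filter Topology Finset Function
open scoped ENNReal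

noncomputable def empiricalFreq {σ : Type*} [DecidableEq σ] (x : ℕ → σ) (ξ : σ) (n : ℕ) : ℝ :=
  (∑ i ∈ range n, if x i = ξ then 1 else 0) / n

def empiricalLimitSet {σ : Type*} [DecidableEq σ] (p : σ → ℝ) : Set (ℕ → σ) :=
  {x | ∀ ξ, Tendsto (empiricalFreq x ξ) atTop (𝓝 (p ξ))}

lemma disjoint_empiricalLimitSet {σ : Type*} [DecidableEq σ] {p p' : σ → ℝ} (h : p ≠ p') :
    Disjoint (empiricalLimitSet p) (empiricalLimitSet p') :=
  Set.disjoint_left.2 fun _ hx hx' => h (funext fun ξ => tendsto_nhds_unique (hx ξ) (hx' ξ))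

section

variable {σ : Type*} [MeasurableSpace σ]

def IsIIDMeasure (P : Measure (ℕ → σ)) (q : σ → ℝ≥0∞) : Prop :=
  ∀ (k : ℕ) (ξs : Fin k → σ), P {x | ∀ i : Fin k, x i = ξs i} = ∏ i, q (ξs i)

variable {P : Measure (ℕ → σ)} {q : σ → ℝ≥0∞}

lemma IsIIDMeasure.isProbabilityMeasure (hP : IsIIDMeasure P q) : IsProbabilityMeasure P :=
  ⟨by simpa using hP 0 Fin.elim0⟩

variable [DiscreteMeasurableSpace σ]

lemma measurableSet_setOf_forall_fin_eq (k : ℕ) (ξs : Fin k → σ) :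
    MeasurableSet {x : ℕ → σ | ∀ i : Fin k, x i = ξs i} := by
  measurability

lemma IsIIDMeasure.measure_setOf_forall_fin_mem (hP : IsIIDMeasure P q) (k : ℕ)
    (A : Fin k → Finset σ) :
    P {x | ∀ i : Fin k, x i ∈ A i} = ∏ i, ∑ ξ ∈ A i, q ξ := by
  have hunion : {x : ℕ → σ | ∀ i : Fin k, x i ∈ A i}
      = ⋃ ξs ∈ Fintype.piFinset A, {x | ∀ i : Fin k, x i = ξs i} := by
    ext x
    simp only [Set.mem_ofPred_eq, Set.mem_iUnion, Fintype.mem_piFinset, exists_prop]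
    exact ⟨fun h => ⟨fun i => x i, h, fun _ => rfl⟩, fun ⟨ξs, hξs, hx⟩ i => hx i ▸ hξs i⟩
  have hdisj : Set.PairwiseDisjoint (Fintype.piFinset A : Set (Fin k → σ))
      fun ξs => {x : ℕ → σ | ∀ i : Fin k, x i = ξs i} :=
    fun ξs _ ξs' _ hne => Set.disjoint_left.2 fun x hx hx' =>
      hne (funext fun i => (hx i).symm.trans (hx' i))
  rw [hunion, measure_biUnion_finset hdisj fun ξs _ => measurableSet_setOf_forall_fin_eq k ξs,
    prod_univ_sum]
  exact sum_congr rfl fun ξs _ => hP k ξs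

lemma IsIIDMeasure.measure_setOf_forall_mem [Fintype σ] (hP : IsIIDMeasure P q)
    (hq : ∑ ξ, q ξ = 1) (S : Finset ℕ) (A : ℕ → Finset σ) :
    P {x | ∀ i ∈ S, x i ∈ A i} = ∏ i ∈ S, ∑ ξ ∈ A i, q ξ := by
  classical
  -- pad `S` to an initial segment `range k`; each padding coordinate contributes `∑ ξ, q ξ = 1`
  obtain ⟨k, hSk⟩ := S.exists_nat_subset_range
  have hset : {x : ℕ → σ | ∀ i ∈ S, x i ∈ A i}
      = {x | ∀ i : Fin k, x i ∈ if (i : ℕ) ∈ S then A i else univ} := by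
    ext x
    simp only [Set.mem_ofPred_eq]
    refine ⟨fun h i => ?_, fun h i hi => ?_⟩
    · split_ifs with hi
      exacts [h i hi, mem_univ _]
    · simpa [hi] using h ⟨i, mem_range.1 (hSk hi)⟩
  rw [hset, hP.measure_setOf_forall_fin_mem,
    Fin.prod_univ_eq_prod_range (fun i => ∑ ξ ∈ if i ∈ S then A i else univ, q ξ)]
  simp only [apply_ite (fun B : Finset σ => ∑ ξ ∈ B, q ξ), hq, prod_ite_mem,
    inter_eq_right.2 hSk]

lemma IsIIDMeasure.measure_coord_preimage [Fintype σ] (hP : IsIIDMeasure P q)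
    (hq : ∑ ξ, q ξ = 1) (n : ℕ) (A : Finset σ) :
    P ((fun x : ℕ → σ => x n) ⁻¹' A) = ∑ ξ ∈ A, q ξ := by
  convert hP.measure_setOf_forall_mem hq {n} fun _ => A using 2 <;> simp [Set.preimage]

lemma IsIIDMeasure.iIndepFun_coord [Fintype σ] (hP : IsIIDMeasure P q) (hq : ∑ ξ, q ξ = 1) :
    iIndepFun (fun n (x : ℕ → σ) => x n) P := by
  classical
  refine iIndepFun_iff_measure_inter_preimage_eq_mul.2 fun S A _ => ?_
  calc P (⋂ i ∈ S, (fun x => x i) ⁻¹' A i) = P {x | ∀ i ∈ S, x i ∈ (A i).toFinset} := by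
        congr 1; ext; simp
    _ = ∏ i ∈ S, ∑ ξ ∈ (A i).toFinset, q ξ := hP.measure_setOf_forall_mem hq S _
    _ = ∏ i ∈ S, P ((fun x => x i) ⁻¹' A i) :=
        prod_congr rfl fun i _ => by rw [← hP.measure_coord_preimage hq, Set.coe_toFinset]

lemma IsIIDMeasure.identDistrib_coord [Fintype σ] (hP : IsIIDMeasure P q) (hq : ∑ ξ, q ξ = 1)
    (m n : ℕ) : IdentDistrib (fun x : ℕ → σ => x m) (fun x => x n) P P := by
  classical
  refine ⟨(measurable_pi_apply m).aemeasurable, (measurable_pi_apply n).aemeasurable,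
    Measure.ext fun A hA => ?_⟩
  rw [Measure.map_apply (measurable_pi_apply m) hA, Measure.map_apply (measurable_pi_apply n) hA,
    ← Set.coe_toFinset A, hP.measure_coord_preimage hq, hP.measure_coord_preimage hq]

lemma IsIIDMeasure.ae_tendsto_empiricalFreq [Fintype σ] [DecidableEq σ] (hP : IsIIDMeasure P q)
    (hq : ∑ ξ, q ξ = 1) (ξ : σ) :
    ∀ᵐ x ∂P, Tendsto (empiricalFreq x ξ) atTop (𝓝 (q ξ).toReal) := by
  have := hP.isProbabilityMeasure
  let φ : σ → ℝ := fun c => if c = ξ then 1 else 0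
  have hX0 : (fun x : ℕ → σ => φ (x 0)) = ((fun x : ℕ → σ => x 0) ⁻¹' {ξ}).indicator 1 := by
    ext x; by_cases h : x 0 = ξ <;> simp [φ, h]
  have hmeas : MeasurableSet ((fun x : ℕ → σ => x 0) ⁻¹' {ξ}) :=
    measurable_pi_apply 0 (measurableSet_singleton ξ)
  have hmean : P[fun x => φ (x 0)] = (q ξ).toReal := by
    rw [hX0, integral_indicator_one hmeas, measureReal_def, ← Finset.coe_singleton,
      hP.measure_coord_preimage hq, sum_singleton]
  have hlln := strong_law_ae_real (fun i (x : ℕ → σ) => φ (x i))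
    (hX0 ▸ (integrable_const 1).indicator hmeas)
    (fun i j hij => ((hP.iIndepFun_coord hq).comp (fun _ => φ) fun _ => .of_discrete).indepFun hij)
    (fun i => (hP.identDistrib_coord hq i 0).comp (u := φ) .of_discrete)
  rw [hmean] at hlln
  exact hlln

lemma IsIIDMeasure.ae_mem_empiricalLimitSet [Fintype σ] [DecidableEq σ] (hP : IsIIDMeasure P q)
    (hq : ∑ ξ, q ξ = 1) : ∀ᵐ x ∂P, x ∈ empiricalLimitSet fun ξ => (q ξ).toReal :=
  ae_all_iff.2 (hP.ae_tendsto_empiricalFreq hq)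

lemma measurable_empiricalFreq [DecidableEq σ] (ξ : σ) (n : ℕ) :
    Measurable fun x : ℕ → σ => empiricalFreq x ξ n :=
  (Finset.measurable_sum _ fun i _ =>
    (Measurable.of_discrete (f := fun c : σ => if c = ξ then (1 : ℝ) else 0)).comp
      (measurable_pi_apply i)).div_const _

lemma measurableSet_empiricalLimitSet [Countable σ] [DecidableEq σ] (p : σ → ℝ) :
    MeasurableSet (empiricalLimitSet p) := by
  rw [empiricalLimitSet, Set.ofPred_forall]
  exact .iInter fun ξ => measurableSet_tendsto _ fun n => measurable_empiricalFreq ξ n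

end

lemma measure_eq_ite_of_ae_mem {ι Ω : Type*} [MeasurableSpace Ω] [DecidableEq ι]
    {μ : ι → Measure Ω} [∀ i, IsProbabilityMeasure (μ i)] {s : ι → Set Ω}
    (hs : Pairwise (Disjoint on s)) (hμ : ∀ i, ∀ᵐ x ∂μ i, x ∈ s i) (i j : ι) :
    μ i (s j) = if i = j then 1 else 0 := by
  split_ifs with hij
  · subst hij
    rw [measure_congr (ae_eq_univ.2 (ae_iff.1 (hμ i))), measure_univ]
  · exact measure_eq_zero_iff_ae_notMem.2
      ((hμ i).mono fun x hx hx' => Set.disjoint_left.1 (hs hij) hx hx')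

theorem mixture_decomposition_general {σ N : Type*} [Fintype σ] [DecidableEq σ] [Fintype N] [DecidableEq N]
    [MeasurableSpace σ] [DiscreteMeasurableSpace σ]
    (p : N → σ → ℝ) (hp : ∀ ν ξ, 0 ≤ p ν ξ) (hp1 : ∀ ν, ∑ ξ, p ν ξ = 1)
    (hdist : ∀ ν ν', ν ≠ ν' → p ν ≠ p ν')
    (w : N → ℝ)
    (P : N → Measure (ℕ → σ))
    (hP : ∀ (ν : N) (k : ℕ) (ξs : Fin k → σ),
      P ν {x | ∀ i : Fin k, x (i : ℕ) = ξs i} = ∏ i, ENNReal.ofReal (p ν (ξs i))) :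
    ∃ Ξ : N → Set (ℕ → σ),
      (∀ ν, MeasurableSet (Ξ ν)) ∧
      (Pairwise (Function.onFun Disjoint Ξ)) ∧
      (∀ ν ν', P ν (Ξ ν') = if ν = ν' then 1 else 0) ∧
      (∀ ν, (∑ ν', (ENNReal.ofReal (w ν')) • P ν') (Ξ ν) = ENNReal.ofReal (w ν)) := by
  have hIID ν : IsIIDMeasure (P ν) fun ξ => ENNReal.ofReal (p ν ξ) := hP ν
  have hq ν : ∑ ξ, ENNReal.ofReal (p ν ξ) = 1 := by
    rw [← ENNReal.ofReal_sum_of_nonneg fun ξ _ => hp ν ξ, hp1, ENNReal.ofReal_one]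
  have hae ν : ∀ᵐ x ∂P ν, x ∈ empiricalLimitSet (p ν) := by
    simpa only [ENNReal.toReal_ofReal (hp ν _)] using (hIID ν).ae_mem_empiricalLimitSet (hq ν)
  have hdisj : Pairwise (Disjoint on fun ν => empiricalLimitSet (p ν)) :=
    fun ν ν' h => disjoint_empiricalLimitSet (hdist ν ν' h)
  have hprob ν := (hIID ν).isProbabilityMeasure
  have hδ := measure_eq_ite_of_ae_mem hdisj hae
  refine ⟨_, fun ν => measurableSet_empiricalLimitSet _, hdisj, hδ, fun ν => ?_⟩
  simp [Measure.finsetSum_apply, hδ]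

/-- Let `σ, N` be finite sets, `(p ν)_{ν∈N}` pairwise distinct probability mass
functions on `σ`, `w : N → [0,1]` weights summing to `1`, `P ν = (p ν)^⊗ℕ` the i.i.d. product
measures on `σ^ℕ` (characterized by their cylinder probabilities), and
`μ = ∑ ν, w ν • P ν` the mixture. Then there are pairwise disjoint measurable sets
`(Ξ ν)_{ν∈N}` with `P ν (Ξ ν') = δ_{ν,ν'}`, and consequently `μ (Ξ ν) = w ν` for all `ν`. -/
theorem mixture_decomposition {σ N : Type*} [Fintype σ] [DecidableEq σ] [Fintype N] [DecidableEq N]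
    [MeasurableSpace σ] [DiscreteMeasurableSpace σ]
    (p : N → σ → ℝ) (hp : ∀ ν ξ, 0 ≤ p ν ξ) (hp1 : ∀ ν, ∑ ξ, p ν ξ = 1)
    (hdist : ∀ ν ν', ν ≠ ν' → p ν ≠ p ν')
    (w : N → ℝ) (hw0 : ∀ ν, 0 ≤ w ν) (hw1' : ∀ ν, w ν ≤ 1) (hw1 : ∑ ν, w ν = 1)
    (P : N → Measure (ℕ → σ)) (hprob : ∀ ν, IsProbabilityMeasure (P ν))
    (hP : ∀ (ν : N) (k : ℕ) (ξs : Fin k → σ),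
      P ν {x | ∀ i : Fin k, x (i : ℕ) = ξs i} = ∏ i, ENNReal.ofReal (p ν (ξs i))) :
    ∃ Ξ : N → Set (ℕ → σ),
      (∀ ν, MeasurableSet (Ξ ν)) ∧
      (Pairwise (Function.onFun Disjoint Ξ)) ∧
      (∀ ν ν', P ν (Ξ ν') = if ν = ν' then 1 else 0) ∧
      (∀ ν, (∑ ν', (ENNReal.ofReal (w ν')) • P ν') (Ξ ν) = ENNReal.ofReal (w ν)) :=
  mixture_decomposition_general p hp hp1 hdist w P hP
end

section
/- In the setting of repeated non-demolition measurements with Kraus operators C_ξ = Σ_ν c_ξ(ν)Π_ν, Σ_ξ C_ξ*C_ξ = 1 and p(·|ν) ≠ p(·|ν') for ν≠ν' (where p(ξ|ν)=|c_ξ(ν)|²), the expected off-diagonal norm satisfies E‖Π_ν ρ^{(k)} Π_{ν'}‖ ≤ ‖Π_ν ρ⁰ Π_{ν'}‖ · δ^k for some δ ∈ (0,1), where the expectation is over protocols (ξ_1,…,ξ_k) with the probability μ(ξ_1,…,ξ_k) = Tr(C_{ξ_k}⋯C_{ξ_1}ρ⁰C_{ξ_1}*⋯C_{ξ_k}*),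 and δ = max_{ν≠ν'} Σ_ξ |c_ξ(ν)||c_ξ(ν')|. -/
/-!
Each projection absorbs a Kraus operator as a scalar, `P ν C_ξ = c_ξ(ν) P ν`, so after a
protocol the unnormalized off-diagonal block is `∏ᵢ c_{ξᵢ}(ν) conj c_{ξᵢ}(ν') • P ν ρ P ν'`. The
probability weight cancels the normalization, and summing the products over all protocols gives
`(∑_ξ |c_ξ(ν)||c_ξ(ν')|)ᵏ`. The completeness relation makes `ξ ↦ |c_ξ(ν)|` a unit vector, two
distinct unit vectors have inner product `< 1`, and there are only finitely many pairs `ν ≠ ν'`.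
-/

open Matrix
open scoped BigOperators ComplexOrder

/-- The trace norm `‖A‖₁ = Tr √(AᴴA)` of a complex matrix. -/
noncomputable def traceNorm {m : Type*} [Fintype m] [DecidableEq m] (A : Matrix m m ℂ) : ℝ :=
  (((Matrix.posSemidef_conjTranspose_mul_self A).1.eigenvectorUnitary.1 *
      diagonal (((↑) : ℝ → ℂ) ∘ Real.sqrt ∘ (Matrix.posSemidef_conjTranspose_mul_self A).1.eigenvalues) *
      (star (Matrix.posSemidef_conjTranspose_mul_self A).1.eigenvectorUnitary : Matrix m m ℂ)).trace).re

/-- The Kraus operator `C_ξ = ∑_ν c_ξ(ν) P_ν`. -/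
noncomputable def krausOp {σ N m : Type*} [Fintype N] [Fintype m] [DecidableEq m]
    (c : σ → N → ℂ) (P : N → Matrix m m ℂ) (ξ : σ) : Matrix m m ℂ :=
  ∑ ν, c ξ ν • P ν

/-- The ordered product `C_{ξ_k} ⋯ C_{ξ_1}` along a protocol `(ξ_1, …, ξ_k)`. -/
noncomputable def ordProd {σ m : Type*} [Fintype m] [DecidableEq m]
    (C : σ → Matrix m m ℂ) {k : ℕ} (ξs : Fin k → σ) : Matrix m m ℂ :=
  ((List.ofFn fun i => C (ξs i)).reverse).prod

section TraceNorm

variable {m : Type*} [Fintype m] [DecidableEq m]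

lemma traceNorm_eq_trace_cfc_sqrt (A : Matrix m m ℂ) :
    traceNorm A = (cfc Real.sqrt (Aᴴ * A)).trace.re := by
  rw [(posSemidef_conjTranspose_mul_self A).1.cfc_eq]; rfl

lemma traceNorm_nonneg (A : Matrix m m ℂ) : 0 ≤ traceNorm A := by
  unfold traceNorm
  rw [trace_mul_comm, ← mul_assoc,
    (posSemidef_conjTranspose_mul_self A).1.eigenvectorUnitary.2.1, one_mul, trace_diagonal,
    Complex.re_sum]
  exact Finset.sum_nonneg fun i _ => by simp [Real.sqrt_nonneg]

lemma traceNorm_smul (z : ℂ) (A : Matrix m m ℂ) :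
    traceNorm (z • A) = ‖z‖ * traceNorm A := by
  have hAA : (z • A)ᴴ * (z • A) = (‖z‖ ^ 2 : ℝ) • (Aᴴ * A) := by
    rw [conjTranspose_smul, smul_mul_smul_comm, Complex.star_def, Complex.conj_mul',
      ← Complex.ofReal_pow, Complex.coe_smul]
  have hsqrt : (fun x : ℝ => Real.sqrt ((‖z‖ ^ 2 : ℝ) • x)) = fun x => ‖z‖ * Real.sqrt x := by
    funext x; rw [smul_eq_mul, Real.sqrt_mul (by positivity), Real.sqrt_sq (norm_nonneg _)]
  rw [traceNorm_eq_trace_cfc_sqrt, traceNorm_eq_trace_cfc_sqrt, hAA,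
    ← cfc_comp_smul _ _ _ (ha := (posSemidef_conjTranspose_mul_self A).1.isSelfAdjoint), hsqrt,
    cfc_const_mul _ _ _ (by fun_prop), trace_smul, Complex.smul_re, smul_eq_mul]

lemma traceNorm_real_smul (r : ℝ) (A : Matrix m m ℂ) :
    traceNorm (r • A) = |r| * traceNorm A := by
  rw [← Complex.coe_smul, traceNorm_smul, Complex.norm_real, Real.norm_eq_abs]

lemma mul_traceNorm_inv_smul_le (r : ℝ) (A : Matrix m m ℂ) :
    r * traceNorm (r⁻¹ • A) ≤ traceNorm A := by
  rw [traceNorm_real_smul, ← mul_assoc, abs_inv, ← div_eq_mul_inv]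
  have hr : r / |r| ≤ 1 := by
    rcases eq_or_ne r 0 with rfl | hr
    · simp
    · exact (div_le_one (abs_pos.mpr hr)).mpr (le_abs_self r)
  simpa using mul_le_mul_of_nonneg_right hr (traceNorm_nonneg A)

end TraceNorm

lemma sum_mul_lt_one_of_ne {σ : Type*} [Fintype σ] {u v : σ → ℝ}
    (hu : ∑ ξ, u ξ ^ 2 = 1) (hv : ∑ ξ, v ξ ^ 2 = 1) (huv : u ≠ v) :
    ∑ ξ, u ξ * v ξ < 1 := by
  obtain ⟨ξ₀, hξ₀⟩ := Function.ne_iff.mp huv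
  have hpos : 0 < ∑ ξ, (u ξ - v ξ) ^ 2 :=
    Finset.sum_pos' (fun _ _ => sq_nonneg _)
      ⟨ξ₀, Finset.mem_univ _, sq_pos_of_ne_zero (sub_ne_zero.mpr hξ₀)⟩
  have hexpand : ∑ ξ, (u ξ - v ξ) ^ 2 = ∑ ξ, u ξ ^ 2 + ∑ ξ, v ξ ^ 2 - 2 * ∑ ξ, u ξ * v ξ := by
    simp only [sub_sq, Finset.sum_add_distrib, Finset.sum_sub_distrib, Finset.mul_sum]
    ring_nf
  linarith

lemma exists_mem_Ioo_forall_le_of_forall_lt_one {ι : Type*} [Finite ι] (s : ι → ℝ)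
    (hs : ∀ i, s i < 1) : ∃ δ ∈ Set.Ioo (0 : ℝ) 1, ∀ i, s i ≤ δ := by
  cases isEmpty_or_nonempty ι with
  | inl _ => exact ⟨1 / 2, by norm_num, isEmptyElim⟩
  | inr _ =>
    obtain ⟨i₀, hi₀⟩ := Finite.exists_max s
    exact ⟨max (1 / 2) (s i₀), ⟨by positivity, max_lt (by norm_num) (hs i₀)⟩,
      fun i => (hi₀ i).trans (le_max_right _ _)⟩

lemma mul_ordProd_of_mul_eq_smul {σ m : Type*} [Fintype m] [DecidableEq m]
    {C : σ → Matrix m m ℂ} {Q : Matrix m m ℂ} {a : σ → ℂ} (h : ∀ ξ, Q * C ξ = a ξ • Q)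
    {k : ℕ} (ξs : Fin k → σ) : Q * ordProd C ξs = (∏ i, a (ξs i)) • Q := by
  have hlist : ∀ L : List σ, Q * (L.map C).prod = (L.map a).prod • Q := by
    intro L
    induction L with
    | nil => simp
    | cons ξ L ih =>
      rw [List.map_cons, List.prod_cons, ← mul_assoc, h, smul_mul_assoc, ih, smul_smul,
        List.map_cons, List.prod_cons]
  have hC : (List.ofFn fun i => C (ξs i)) = (List.ofFn ξs).map C := List.map_ofFn.symm
  rw [ordProd, hC, ← List.map_reverse, hlist, List.map_reverse, List.prod_reverse, List.map_ofFn,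
    List.prod_ofFn]
  rfl

section Kraus

variable {σ N m : Type*} [Fintype N] [Fintype m] [DecidableEq m]

lemma proj_mul_krausOp {c : σ → N → ℂ} {P : N → Matrix m m ℂ} [DecidableEq N]
    (horth : ∀ ν ν', P ν * P ν' = if ν = ν' then P ν else 0) (ν : N) (ξ : σ) :
    P ν * krausOp c P ξ = c ξ ν • P ν := by
  simp only [krausOp, Finset.mul_sum, mul_smul_comm, horth, smul_ite, smul_zero,
    Finset.sum_ite_eq, Finset.mem_univ, if_true]

lemma krausOp_conjTranspose {c : σ → N → ℂ} {P : N → Matrix m m ℂ}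
    (hherm : ∀ ν, (P ν)ᴴ = P ν) (ξ : σ) :
    (krausOp c P ξ)ᴴ = krausOp (fun ξ ν => star (c ξ ν)) P ξ := by
  simp only [krausOp, conjTranspose_sum, conjTranspose_smul, hherm]

lemma sum_norm_sq_eq_one [Fintype σ] [DecidableEq N] {c : σ → N → ℂ} {P : N → Matrix m m ℂ}
    (hherm : ∀ ν, (P ν)ᴴ = P ν)
    (horth : ∀ ν ν', P ν * P ν' = if ν = ν' then P ν else 0) (hne : ∀ ν, P ν ≠ 0)
    (hkraus : ∑ ξ, (krausOp c P ξ)ᴴ * krausOp c P ξ = 1) (ν : N) :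
    ∑ ξ, ‖c ξ ν‖ ^ 2 = 1 := by
  have hP : ((∑ ξ, ‖c ξ ν‖ ^ 2 : ℝ) : ℂ) • P ν = P ν := by
    calc ((∑ ξ, ‖c ξ ν‖ ^ 2 : ℝ) : ℂ) • P ν
        = ∑ ξ, P ν * (krausOp c P ξ)ᴴ * krausOp c P ξ := by
          simp only [krausOp_conjTranspose hherm, proj_mul_krausOp horth, smul_mul_assoc,
            smul_smul, ← Finset.sum_smul, Complex.star_def, Complex.conj_mul']
          push_cast; rfl
      _ = P ν := by simp only [mul_assoc, ← Finset.mul_sum, hkraus, mul_one]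
  have hscalar : ((∑ ξ, ‖c ξ ν‖ ^ 2 : ℝ) : ℂ) = 1 := by
    have : (((∑ ξ, ‖c ξ ν‖ ^ 2 : ℝ) : ℂ) - 1) • P ν = 0 := by rw [sub_smul, one_smul, hP, sub_self]
    exact sub_eq_zero.mp ((smul_eq_zero.mp this).resolve_right (hne ν))
  exact_mod_cast hscalar

lemma traceNorm_proj_mul_ordProd_mul_proj [Fintype σ] [DecidableEq N]
    {c : σ → N → ℂ} {P : N → Matrix m m ℂ} (hherm : ∀ ν, (P ν)ᴴ = P ν)
    (horth : ∀ ν ν', P ν * P ν' = if ν = ν' then P ν else 0)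
    (ρ : Matrix m m ℂ) (ν ν' : N) {k : ℕ} (ξs : Fin k → σ) :
    traceNorm (P ν * (ordProd (krausOp c P) ξs * ρ * (ordProd (krausOp c P) ξs)ᴴ) * P ν')
      = (∏ i, ‖c (ξs i) ν‖ * ‖c (ξs i) ν'‖) * traceNorm (P ν * ρ * P ν') := by
  set B := ordProd (krausOp c P) ξs
  have hleft : P ν * B = (∏ i, c (ξs i) ν) • P ν :=
    mul_ordProd_of_mul_eq_smul (proj_mul_krausOp horth ν) ξs
  have hright : Bᴴ * P ν' = star (∏ i, c (ξs i) ν') • P ν' := by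
    rw [← hherm ν', ← conjTranspose_mul, hherm,
      mul_ordProd_of_mul_eq_smul (proj_mul_krausOp horth ν') ξs, conjTranspose_smul, hherm]
  have hsandwich : P ν * (B * ρ * Bᴴ) * P ν'
      = ((∏ i, c (ξs i) ν) * star (∏ i, c (ξs i) ν')) • (P ν * ρ * P ν') := by
    rw [show P ν * (B * ρ * Bᴴ) * P ν' = P ν * B * ρ * (Bᴴ * P ν') by noncomm_ring, hleft,
      hright, smul_mul_assoc, smul_mul_assoc, mul_smul_comm, smul_smul]
  rw [hsandwich, traceNorm_smul, norm_mul, norm_star, norm_prod, norm_prod,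
    ← Finset.prod_mul_distrib]

end Kraus

theorem expected_off_diagonal_decay_general {σ N m : Type*} [Fintype σ] [Fintype N] [DecidableEq N]
    [Fintype m] [DecidableEq m]
    (c : σ → N → ℂ) (P : N → Matrix m m ℂ)
    (hherm : ∀ ν, (P ν)ᴴ = P ν)
    (horth : ∀ ν ν', P ν * P ν' = if ν = ν' then P ν else 0)
    (hne : ∀ ν, P ν ≠ 0)
    (hkraus : ∑ ξ, (krausOp c P ξ)ᴴ * krausOp c P ξ = 1)
    (hdist : ∀ ν ν', ν ≠ ν' →
      (fun ξ => ‖c ξ ν‖ ^ 2) ≠ (fun ξ => ‖c ξ ν'‖ ^ 2))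
    (ρ : Matrix m m ℂ) :
    ∃ δ ∈ Set.Ioo (0 : ℝ) 1,
      (∀ ν ν', ν ≠ ν' → ∑ ξ, ‖c ξ ν‖ * ‖c ξ ν'‖ ≤ δ) ∧
      ∀ (ν ν' : N), ν ≠ ν' → ∀ (k : ℕ),
        (∑ ξs : Fin k → σ,
            ((ordProd (krausOp c P) ξs * ρ * (ordProd (krausOp c P) ξs)ᴴ).trace).re *
              traceNorm
                (P ν *
                  ((((ordProd (krausOp c P) ξs * ρ *
                        (ordProd (krausOp c P) ξs)ᴴ).trace).re)⁻¹ •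
                    (ordProd (krausOp c P) ξs * ρ * (ordProd (krausOp c P) ξs)ᴴ)) *
                  P ν'))
          ≤ traceNorm (P ν * ρ * P ν') * δ ^ k := by
  have hnorm := sum_norm_sq_eq_one hherm horth hne hkraus
  obtain ⟨δ, hδ, hoverlap⟩ := exists_mem_Ioo_forall_le_of_forall_lt_one
    (fun p : {p : N × N // p.1 ≠ p.2} => ∑ ξ, ‖c ξ p.1.1‖ * ‖c ξ p.1.2‖)
    fun ⟨(ν, ν'), h⟩ => sum_mul_lt_one_of_ne (hnorm ν) (hnorm ν')
      fun heq => hdist ν ν' h (congrArg (fun f ξ => f ξ ^ 2) heq)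
  refine ⟨δ, hδ, fun ν ν' h => hoverlap ⟨(ν, ν'), h⟩, fun ν ν' h k => ?_⟩
  calc _ ≤ ∑ ξs : Fin k → σ, traceNorm (P ν *
          (ordProd (krausOp c P) ξs * ρ * (ordProd (krausOp c P) ξs)ᴴ) * P ν') := by
        refine Finset.sum_le_sum fun ξs _ => ?_
        set M := ordProd (krausOp c P) ξs * ρ * (ordProd (krausOp c P) ξs)ᴴ
        rw [mul_smul_comm, smul_mul_assoc]
        exact mul_traceNorm_inv_smul_le M.trace.re _
    _ = (∑ ξ, ‖c ξ ν‖ * ‖c ξ ν'‖) ^ k * traceNorm (P ν * ρ * P ν') := by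
        simp only [traceNorm_proj_mul_ordProd_mul_proj hherm horth, ← Finset.sum_mul,
          Fintype.sum_pow]
    _ ≤ traceNorm (P ν * ρ * P ν') * δ ^ k := by
        rw [mul_comm]
        gcongr
        · exact traceNorm_nonneg _
        · exact hoverlap ⟨(ν, ν'), h⟩

/-- in the repeated non-demolition measurement model, the expected norm of the
off-diagonal block of the posterior state decays exponentially:
`E‖P_ν ρ⁽ᵏ⁾ P_{ν'}‖ ≤ ‖P_ν ρ⁰ P_{ν'}‖ · δᵏ` for some `δ ∈ (0,1)` dominating all the
overlaps `∑_ξ |c_ξ(ν)||c_ξ(ν')|`, `ν ≠ ν'`. -/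
theorem expected_off_diagonal_decay {σ N m : Type*} [Fintype σ] [Fintype N] [DecidableEq N]
    [Fintype m] [DecidableEq m]
    (c : σ → N → ℂ) (P : N → Matrix m m ℂ)
    (hherm : ∀ ν, (P ν)ᴴ = P ν)
    (horth : ∀ ν ν', P ν * P ν' = if ν = ν' then P ν else 0)
    (hsum : ∑ ν, P ν = 1) (hne : ∀ ν, P ν ≠ 0)
    (hkraus : ∑ ξ, (krausOp c P ξ)ᴴ * krausOp c P ξ = 1)
    (hdist : ∀ ν ν', ν ≠ ν' →
      (fun ξ => ‖c ξ ν‖ ^ 2) ≠ (fun ξ => ‖c ξ ν'‖ ^ 2))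
    (ρ : Matrix m m ℂ) (hρ : ρ.PosSemidef) (hρ1 : ρ.trace = 1) :
    ∃ δ ∈ Set.Ioo (0 : ℝ) 1,
      (∀ ν ν', ν ≠ ν' → ∑ ξ, ‖c ξ ν‖ * ‖c ξ ν'‖ ≤ δ) ∧
      ∀ (ν ν' : N), ν ≠ ν' → ∀ (k : ℕ),
        (∑ ξs : Fin k → σ,
            ((ordProd (krausOp c P) ξs * ρ * (ordProd (krausOp c P) ξs)ᴴ).trace).re *
              traceNorm
                (P ν *
                  ((((ordProd (krausOp c P) ξs * ρ *
                        (ordProd (krausOp c P) ξs)ᴴ).trace).re)⁻¹ •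
                    (ordProd (krausOp c P) ξs * ρ * (ordProd (krausOp c P) ξs)ᴴ)) *
                  P ν'))
          ≤ traceNorm (P ν * ρ * P ν') * δ ^ k :=
  expected_off_diagonal_decay_general c P hherm horth hne hkraus hdist ρ
end

section
/- Let H be a finite-dimensional Hilbert space and Φ_* : B(H) → B(H) a unital completely positive map with Kraus representation Φ_*[X] = Σ_α Γ_α* X Γ_α. Suppose there is a faithful state ρ (density matrix with Tr(ρ A*A)=0 ⟹ A=0) that is stationary for the predual, i.e. Tr(ρ Φ_*[X]) = Tr(ρ X) for all X. Then the fixed-point set ker(Φ_* − id) = {A ∈ B(H) : Φ_*[A]=A} equals the commutant {Γ_α}'_α of the Kraus operators. -/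
open Matrix
open scoped BigOperators ComplexOrder

/-! For a fixed point `A` of the unital Kraus map `Φ`, the defect `Φ[AᴴA] - AᴴA` equals
`∑ α, [Γ α, A]ᴴ [Γ α, A]`. Stationarity of `ρ` makes its `ρ`-trace vanish; each summand has
nonnegative `ρ`-trace, so each vanishes, and faithfulness of `ρ` forces `[Γ α, A] = 0`.
Conversely, unitality makes every element of the commutant a fixed point. -/

namespace Matrix

variable {ι m R : Type*} [Fintype ι] [Fintype m]

theorem PosSemidef.trace_mul_conjTranspose_mul_self_nonneg [CommRing R] [PartialOrder R]
    [StarRing R] [AddLeftMono R] {ρ : Matrix m m R} (hρ : ρ.PosSemidef) (C : Matrix m m R) :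
    0 ≤ (ρ * (Cᴴ * C)).trace := by
  rw [← Matrix.mul_assoc, trace_mul_cycle]
  exact (hρ.mul_mul_conjTranspose_same C).trace_nonneg

section Kraus

variable [Ring R] [StarRing R]

def krausMap (Γ : ι → Matrix m m R) (X : Matrix m m R) : Matrix m m R :=
  ∑ α, (Γ α)ᴴ * X * Γ α

variable {Γ : ι → Matrix m m R}

theorem krausMap_conjTranspose (X : Matrix m m R) : krausMap Γ Xᴴ = (krausMap Γ X)ᴴ := by
  simp only [krausMap, conjTranspose_sum, conjTranspose_mul, conjTranspose_conjTranspose,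
    Matrix.mul_assoc]

variable [DecidableEq m] (hunital : ∑ α, (Γ α)ᴴ * Γ α = 1)
include hunital

theorem krausMap_eq_self_of_commute {A : Matrix m m R} (hA : ∀ α, A * Γ α = Γ α * A) :
    krausMap Γ A = A := by
  calc krausMap Γ A = (∑ α, (Γ α)ᴴ * Γ α) * A := by
        simp only [krausMap, Finset.sum_mul, Matrix.mul_assoc, hA]
    _ = A := by rw [hunital, Matrix.one_mul]

theorem sum_commutator_conjTranspose_mul_self (A : Matrix m m R) :
    ∑ α, (Γ α * A - A * Γ α)ᴴ * (Γ α * A - A * Γ α) =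
      krausMap Γ (Aᴴ * A) - Aᴴ * krausMap Γ A - krausMap Γ Aᴴ * A + Aᴴ * A := by
  have hexpand : ∀ α, (Γ α * A - A * Γ α)ᴴ * (Γ α * A - A * Γ α) =
      (Γ α)ᴴ * (Aᴴ * A) * Γ α - Aᴴ * ((Γ α)ᴴ * A * Γ α) - (Γ α)ᴴ * Aᴴ * Γ α * A +
        Aᴴ * ((Γ α)ᴴ * Γ α) * A := fun α => by
    simp only [conjTranspose_sub, conjTranspose_mul]
    noncomm_ring
  simp only [hexpand, Finset.sum_add_distrib, Finset.sum_sub_distrib, ← Finset.mul_sum,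
    ← Finset.sum_mul, hunital, Matrix.mul_one, krausMap]

theorem sum_commutator_conjTranspose_mul_self_of_krausMap_eq_self {A : Matrix m m R}
    (hA : krausMap Γ A = A) :
    ∑ α, (Γ α * A - A * Γ α)ᴴ * (Γ α * A - A * Γ α) = krausMap Γ (Aᴴ * A) - Aᴴ * A := by
  rw [sum_commutator_conjTranspose_mul_self hunital, krausMap_conjTranspose, hA]
  abel

end Kraus

end Matrix

theorem fixed_points_eq_commutant_general {ι m : Type*} [Fintype ι] [Fintype m] [DecidableEq m]
    (Γ : ι → Matrix m m ℂ)
    (Φ : Matrix m m ℂ → Matrix m m ℂ)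
    (hΦ : ∀ X, Φ X = ∑ α, (Γ α)ᴴ * X * Γ α)
    (hunital : ∑ α, (Γ α)ᴴ * Γ α = 1)
    (ρ : Matrix m m ℂ) (hρ : ρ.PosSemidef)
    (hfaithful : ∀ A : Matrix m m ℂ, (ρ * (Aᴴ * A)).trace = 0 → A = 0)
    (hstat : ∀ X : Matrix m m ℂ, (ρ * Φ X).trace = (ρ * X).trace) :
    {A : Matrix m m ℂ | Φ A = A} = {A : Matrix m m ℂ | ∀ α, A * Γ α = Γ α * A} := by
  obtain rfl : Φ = krausMap Γ := funext hΦ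
  ext A
  refine ⟨fun hA α => ?_, krausMap_eq_self_of_commute hunital⟩
  have hdefect : ∑ α, (ρ * ((Γ α * A - A * Γ α)ᴴ * (Γ α * A - A * Γ α))).trace = 0 := by
    rw [← trace_sum, ← Finset.mul_sum, sum_commutator_conjTranspose_mul_self_of_krausMap_eq_self hunital hA,
      Matrix.mul_sub, trace_sub, hstat, sub_self]
  have hterm := (Finset.sum_eq_zero_iff_of_nonneg fun α _ =>
    hρ.trace_mul_conjTranspose_mul_self_nonneg _).mp hdefect α (Finset.mem_univ α)
  exact (sub_eq_zero.mp (hfaithful _ hterm)).symm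

/-- let `Φ_*[X] = ∑_α Γ_αᴴ X Γ_α` be a unital completely positive map on
`B(H)`, `H` finite-dimensional, admitting a faithful stationary state `ρ` (density matrix
with `Tr(ρ AᴴA) = 0 → A = 0` and `Tr(ρ Φ_*[X]) = Tr(ρ X)` for all `X`). Then the
fixed-point set `{A : Φ_*[A] = A}` equals the commutant of the Kraus operators `{Γ_α}`. -/
theorem fixed_points_eq_commutant {ι m : Type*} [Fintype ι] [Fintype m] [DecidableEq m]
    (Γ : ι → Matrix m m ℂ)
    (Φ : Matrix m m ℂ → Matrix m m ℂ)
    (hΦ : ∀ X, Φ X = ∑ α, (Γ α)ᴴ * X * Γ α)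
    (hunital : ∑ α, (Γ α)ᴴ * Γ α = 1)
    (ρ : Matrix m m ℂ) (hρ : ρ.PosSemidef) (hρ1 : ρ.trace = 1)
    (hfaithful : ∀ A : Matrix m m ℂ, (ρ * (Aᴴ * A)).trace = 0 → A = 0)
    (hstat : ∀ X : Matrix m m ℂ, (ρ * Φ X).trace = (ρ * X).trace) :
    {A : Matrix m m ℂ | Φ A = A} = {A : Matrix m m ℂ | ∀ α, A * Γ α = Γ α * A} :=
  fixed_points_eq_commutant_general Γ Φ hΦ hunital ρ hρ hfaithful hstat
end

section
/- Kadison–Schwarz defect identity for fixed points: let Φ_*[X] = Σ_α Γ_α* X Γ_α be a unital completely positive map on B(H), H finite-dimensional, and let A satisfy Φ_*[A]=A and Φ_*[A*]=A*. Then Φ_*[AA*] − AA* = Σ_α [A*,Γ_α]* [A*,Γ_α], which is in particular a positive operator. -/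
/-!
Expanding the commutators gives `∑ α, [A⋆, Γ α]⋆ [A⋆, Γ α] = Φ (A A⋆) - Φ A · A⋆ - A · Φ A⋆ + A · Φ 1 · A⋆`
in any star ring; the fixed-point equations and unitality collapse the right side to
`Φ (A A⋆) - A A⋆`, and a sum of operators `B⋆ B` is positive.
-/

open Matrix
open scoped ComplexOrder

section StarRing

variable {R : Type*} [Ring R] [StarRing R]

theorem star_commutator_mul_commutator (A G : R) :
    star (star A * G - G * star A) * (star A * G - G * star A) =
      star G * (A * star A) * G - (star G * A * G) * star A
        - A * (star G * star A * G) + A * (star G * G) * star A := by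
  simp only [star_sub, star_mul, star_star]
  noncomm_ring

theorem sum_star_commutator_mul_commutator {ι : Type*} (s : Finset ι) (Γ : ι → R) (A : R) :
    ∑ α ∈ s, star (star A * Γ α - Γ α * star A) * (star A * Γ α - Γ α * star A) =
      ∑ α ∈ s, star (Γ α) * (A * star A) * Γ α - (∑ α ∈ s, star (Γ α) * A * Γ α) * star A
        - A * ∑ α ∈ s, star (Γ α) * star A * Γ α + A * (∑ α ∈ s, star (Γ α) * Γ α) * star A := by
  simp only [star_commutator_mul_commutator, Finset.sum_add_distrib, Finset.sum_sub_distrib,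
    Finset.sum_mul, Finset.mul_sum]

end StarRing

/-- Kadison–Schwarz defect identity for fixed points: if
`Φ_*[X] = ∑_α Γ_αᴴ X Γ_α` is unital (`∑_α Γ_αᴴ Γ_α = 1`) and `A` satisfies `Φ_*[A] = A`
and `Φ_*[Aᴴ] = Aᴴ`, then `Φ_*[AAᴴ] − AAᴴ = ∑_α [Aᴴ,Γ_α]ᴴ [Aᴴ,Γ_α]`, which is in
particular a positive semidefinite operator. -/
theorem kadison_schwarz_defect {ι m : Type*} [Fintype ι] [Fintype m] [DecidableEq m]
    (Γ : ι → Matrix m m ℂ)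
    (Φ : Matrix m m ℂ → Matrix m m ℂ)
    (hΦ : ∀ X, Φ X = ∑ α, (Γ α)ᴴ * X * Γ α)
    (hunital : ∑ α, (Γ α)ᴴ * Γ α = 1)
    (A : Matrix m m ℂ) (hA : Φ A = A) (hA' : Φ Aᴴ = Aᴴ) :
    Φ (A * Aᴴ) - A * Aᴴ =
      ∑ α, (Aᴴ * Γ α - Γ α * Aᴴ)ᴴ * (Aᴴ * Γ α - Γ α * Aᴴ) ∧
    (Φ (A * Aᴴ) - A * Aᴴ).PosSemidef := by
  have defect : Φ (A * Aᴴ) - A * Aᴴ =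
      ∑ α, (Aᴴ * Γ α - Γ α * Aᴴ)ᴴ * (Aᴴ * Γ α - Γ α * Aᴴ) := by
    have expand := sum_star_commutator_mul_commutator Finset.univ Γ A
    simp only [← hΦ, star_eq_conjTranspose, hA, hA', hunital, mul_one] at expand
    rw [expand]
    abel
  exact ⟨defect, defect ▸ posSemidef_sum _ fun α _ => posSemidef_conjTranspose_mul_self _⟩
end

section
/- Let Φ_{*ξ}, ξ∈σ (σ finite), be completely positive maps on B(H) (H finite-dimensional) with Φ_*(σ) := Σ_ξ Φ_{*ξ} unital, commuting pairwise (Φ_{*ξ}∘Φ_{*ξ'} = Φ_{*ξ'}∘Φ_{*ξ}), and assume Φ(σ) = Φ_*(σ)* has a faithful stationary state. Then the operators Φ_{*ξ}[1], ξ∈σ, commute pairwise: [Φ_{*ξ}[1], Φ_{*ξ'}[1]] = 0. -/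
open Matrix
open scoped BigOperators ComplexOrder

/-- A linear map on matrices is completely positive if all its finite amplifications
`Φ ⊗ id_n` preserve positive semidefiniteness. -/
def IsCompletelyPositive {m : Type*} [Fintype m] [DecidableEq m]
    (Φ : Matrix m m ℂ →ₗ[ℂ] Matrix m m ℂ) : Prop :=
  ∀ (n : ℕ) (A : Matrix (m × Fin n) (m × Fin n) ℂ), A.PosSemidef →
    (Matrix.of fun p q : m × Fin n =>
      Φ (Matrix.of fun a b => A (a, p.2) (b, q.2)) p.1 q.1).PosSemidef

/-!
Because the `Φ ξ` commute and `∑ ξ, Φ ξ 1 = 1`, each `X = Φ ξ 1` is a Hermitian fixed point of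
`Ψ = ∑ ξ, Φ ξ`. Collecting Kraus operators of all `Φ ξ` gives `Ψ Y = ∑ₖ Vₖ Y Vₖᴴ`, and then
`∑ₖ [Vₖ, X] [Vₖ, X]ᴴ = Ψ (X²) - X²`. The stationary state `ρ` gives this positive matrix
expectation zero, so faithfulness of `ρ` forces `[Vₖ, X] = 0`. Thus `X` commutes with every
Kraus operator of `Φ ξ'` and with its adjoint, hence with `Φ ξ' 1 = ∑ₖ Vₖ Vₖᴴ`.
-/

namespace Matrix

variable {m κ 𝕜 : Type*} [Fintype m] [Fintype κ] [RCLike 𝕜]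

def krausSum (V : κ → Matrix m m 𝕜) (X : Matrix m m 𝕜) : Matrix m m 𝕜 :=
  ∑ k, V k * X * (V k)ᴴ

theorem isHermitian_krausSum {X : Matrix m m 𝕜} (hX : X.IsHermitian) (V : κ → Matrix m m 𝕜) :
    (krausSum V X).IsHermitian := by
  rw [IsHermitian, krausSum, conjTranspose_sum]
  refine Finset.sum_congr rfl fun k _ => ?_
  rw [conjTranspose_mul, conjTranspose_mul, conjTranspose_conjTranspose, hX.eq, Matrix.mul_assoc]

theorem _root_.Commute.krausSum_left {V : κ → Matrix m m 𝕜} {X Y : Matrix m m 𝕜}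
    (hX : X.IsHermitian) (hV : ∀ k, Commute (V k) X) (hY : Commute Y X) :
    Commute (krausSum V Y) X := by
  refine Commute.sum_left _ _ _ fun k _ => ((hV k).mul_left hY).mul_left ?_
  simpa [hX.eq, star_eq_conjTranspose] using (hV k).star_star

theorem trace_mul_mul_conjTranspose_eq_sum (ρ D : Matrix m m 𝕜) :
    (ρ * (D * Dᴴ)).trace = ∑ j, star (D.col j) ⬝ᵥ ρ *ᵥ D.col j := by
  rw [← Matrix.mul_assoc, trace_mul_comm]
  simp only [trace, diag, mul_apply, conjTranspose_apply, dotProduct, mulVec, Pi.star_apply,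
    col_apply]

theorem PosSemidef.trace_mul_mul_conjTranspose_nonneg {ρ : Matrix m m 𝕜} (hρ : ρ.PosSemidef)
    (D : Matrix m m 𝕜) : 0 ≤ (ρ * (D * Dᴴ)).trace := by
  rw [trace_mul_mul_conjTranspose_eq_sum]
  exact Finset.sum_nonneg fun j _ => hρ.dotProduct_mulVec_nonneg _

theorem PosDef.trace_mul_mul_conjTranspose_eq_zero_iff {ρ : Matrix m m 𝕜} (hρ : ρ.PosDef)
    {D : Matrix m m 𝕜} : (ρ * (D * Dᴴ)).trace = 0 ↔ D = 0 := by
  refine ⟨fun h => ?_, fun h => by simp [h]⟩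
  rw [trace_mul_mul_conjTranspose_eq_sum,
    Finset.sum_eq_zero_iff_of_nonneg fun j _ => hρ.posSemidef.dotProduct_mulVec_nonneg _] at h
  ext a j
  by_contra hD
  refine (hρ.dotProduct_mulVec_pos (x := D.col j) fun hj => hD ?_).ne' (h j (Finset.mem_univ j))
  exact congrFun hj a

variable [DecidableEq m]

def choiMatrix (Φ : Matrix m m 𝕜 →ₗ[𝕜] Matrix m m 𝕜) : Matrix (m × m) (m × m) 𝕜 :=
  of fun p q => Φ (single p.2 q.2 1) p.1 q.1

theorem apply_eq_krausSum_of_choiMatrix_eq {Φ : Matrix m m 𝕜 →ₗ[𝕜] Matrix m m 𝕜}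
    {v : κ → m × m → 𝕜} (hv : choiMatrix Φ = ∑ k, vecMulVec (v k) (star (v k)))
    (X : Matrix m m 𝕜) : Φ X = krausSum (fun k => of (Function.curry (v k))) X := by
  have hsingle : ∀ b d a c, Φ (single b d 1) a c = ∑ k, v k (a, b) * star (v k (c, d)) :=
    fun b d a c => by
      simpa [choiMatrix, vecMulVec_apply, Matrix.sum_apply] using congr_fun₂ hv (a, b) (c, d)
  have hsmul : ∀ b d, single b d (X b d) = X b d • single b d 1 := by simp
  ext a c
  conv_lhs => rw [matrix_eq_sum_single X]
  simp only [map_sum, Matrix.sum_apply, krausSum, mul_apply, conjTranspose_apply, of_apply,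
    Function.curry_apply, hsmul, map_smul, smul_apply, hsingle, smul_eq_mul, Finset.mul_sum,
    Finset.sum_mul]
  rw [Finset.sum_comm]
  simp_rw [Finset.sum_comm (γ := κ)]
  congr! 3 with d b k
  ring

theorem sum_commutator_mul_conjTranspose (V : κ → Matrix m m 𝕜) {X : Matrix m m 𝕜}
    (hX : X.IsHermitian) :
    ∑ k, (V k * X - X * V k) * (V k * X - X * V k)ᴴ
      = krausSum V (X * X) - krausSum V X * X - X * krausSum V X + X * krausSum V 1 * X := by
  simp only [krausSum, Finset.sum_mul, Finset.mul_sum, ← Finset.sum_sub_distrib,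
    ← Finset.sum_add_distrib]
  refine Finset.sum_congr rfl fun k _ => ?_
  simp only [conjTranspose_sub, conjTranspose_mul, hX.eq]
  noncomm_ring

theorem commute_of_krausSum_eq_self {ρ : Matrix m m 𝕜} (hρ : ρ.PosDef) {V : κ → Matrix m m 𝕜}
    (hunital : krausSum V 1 = 1) (hstat : ∀ Y, (ρ * krausSum V Y).trace = (ρ * Y).trace)
    {X : Matrix m m 𝕜} (hX : X.IsHermitian) (hfix : krausSum V X = X) (k : κ) :
    Commute (V k) X := by
  have hsum : ∑ k, (ρ * ((V k * X - X * V k) * (V k * X - X * V k)ᴴ)).trace = 0 := by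
    rw [← trace_sum, ← Finset.mul_sum, sum_commutator_mul_conjTranspose V hX, hfix, hunital,
      mul_one, sub_add_cancel, mul_sub, trace_sub, hstat, sub_self]
  rw [Finset.sum_eq_zero_iff_of_nonneg fun k _ =>
    hρ.posSemidef.trace_mul_mul_conjTranspose_nonneg _] at hsum
  exact sub_eq_zero.mp (hρ.trace_mul_mul_conjTranspose_eq_zero_iff.mp (hsum k (Finset.mem_univ k)))

end Matrix

namespace IsCompletelyPositive

variable {m : Type*} [Fintype m] [DecidableEq m] {Φ : Matrix m m ℂ →ₗ[ℂ] Matrix m m ℂ}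

theorem posSemidef_choiMatrix (hΦ : IsCompletelyPositive Φ) : (choiMatrix Φ).PosSemidef := by
  let e := Fintype.equivFin m
  -- the Choi matrix is a compression of the amplification of `Φ` at the rank-one matrix `u uᴴ`
  let u : m × Fin (Fintype.card m) → ℂ := fun p => if p.1 = e.symm p.2 then 1 else 0
  have hblock : ∀ i j, (of fun a b => vecMulVec u (star u) (a, i) (b, j))
      = single (e.symm i) (e.symm j) 1 := by
    intro i j
    ext a b
    by_cases ha : a = e.symm i <;> by_cases hb : b = e.symm j <;>
      simp [u, vecMulVec_apply, ha, hb, eq_comm]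
  have hchoi : choiMatrix Φ = (of fun p q : m × Fin (Fintype.card m) =>
      Φ (of fun a b => vecMulVec u (star u) (a, p.2) (b, q.2)) p.1 q.1).submatrix
        (Prod.map id e) (Prod.map id e) := by
    ext p q
    simp [choiMatrix, hblock]
  rw [hchoi]
  exact (hΦ _ _ (posSemidef_vecMulVec_self_star u)).submatrix _

theorem exists_eq_krausSum (hΦ : IsCompletelyPositive Φ) :
    ∃ (N : ℕ) (V : Fin N → Matrix m m ℂ), ∀ X, Φ X = krausSum V X := by
  obtain ⟨N, v, hv⟩ := posSemidef_iff_eq_sum_vecMulVec.mp hΦ.posSemidef_choiMatrix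
  exact ⟨N, _, apply_eq_krausSum_of_choiMatrix_eq hv⟩

end IsCompletelyPositive

theorem phi_one_commute_general {σ m : Type*} [Fintype σ] [Fintype m] [DecidableEq m]
    (Φ : σ → (Matrix m m ℂ →ₗ[ℂ] Matrix m m ℂ))
    (hCP : ∀ ξ, IsCompletelyPositive (Φ ξ))
    (hunital : ∑ ξ, Φ ξ 1 = 1)
    (hcomm : ∀ ξ ξ', (Φ ξ).comp (Φ ξ') = (Φ ξ').comp (Φ ξ))
    (ρ : Matrix m m ℂ) (hρ : ρ.PosDef)
    (hstat : ∀ X : Matrix m m ℂ, (ρ * (∑ ξ, Φ ξ X)).trace = (ρ * X).trace) :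
    ∀ ξ ξ', Φ ξ 1 * Φ ξ' 1 - Φ ξ' 1 * Φ ξ 1 = 0 := by
  intro ξ ξ'
  choose N V hV using fun ζ => (hCP ζ).exists_eq_krausSum
  let W : (Σ ζ, Fin (N ζ)) → Matrix m m ℂ := fun p => V p.1 p.2
  have hW : ∀ Y, krausSum W Y = ∑ ζ, Φ ζ Y := fun Y => by
    simp only [krausSum, W, hV, Fintype.sum_sigma]
  have hfix : ∑ ζ, Φ ζ (Φ ξ 1) = Φ ξ 1 := by
    calc ∑ ζ, Φ ζ (Φ ξ 1) = Φ ξ (∑ ζ, Φ ζ 1) := by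
          simp only [map_sum, ← LinearMap.comp_apply, hcomm]
      _ = Φ ξ 1 := by rw [hunital]
  have hherm : (Φ ξ 1).IsHermitian := hV ξ 1 ▸ isHermitian_krausSum isHermitian_one _
  have hVX : ∀ k, Commute (V ξ' k) (Φ ξ 1) := fun k =>
    commute_of_krausSum_eq_self hρ (V := W) (by rw [hW, hunital])
      (fun Y => by rw [hW]; exact hstat Y) hherm (by rw [hW, hfix]) ⟨ξ', k⟩
  rw [sub_eq_zero, hV ξ' 1]
  exact ((Commute.one_left _).krausSum_left hherm hVX).symm.eq

/-- let `Φ_{*ξ}`, `ξ ∈ σ` finite, be completely positive maps on `B(H)`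
(`H` finite-dimensional) with `∑_ξ Φ_{*ξ}[1] = 1`, commuting pairwise, and such that the
dual map of `∑_ξ Φ_{*ξ}` has a faithful (full-rank) stationary state `ρ`. Then the
operators `Φ_{*ξ}[1]` commute pairwise. -/
theorem phi_one_commute {σ m : Type*} [Fintype σ] [Fintype m] [DecidableEq m]
    (Φ : σ → (Matrix m m ℂ →ₗ[ℂ] Matrix m m ℂ))
    (hCP : ∀ ξ, IsCompletelyPositive (Φ ξ))
    (hunital : ∑ ξ, Φ ξ 1 = 1)
    (hcomm : ∀ ξ ξ', (Φ ξ).comp (Φ ξ') = (Φ ξ').comp (Φ ξ))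
    (ρ : Matrix m m ℂ) (hρ : ρ.PosDef) (hρ1 : ρ.trace = 1)
    (hstat : ∀ X : Matrix m m ℂ, (ρ * (∑ ξ, Φ ξ X)).trace = (ρ * X).trace) :
    ∀ ξ ξ', Φ ξ 1 * Φ ξ' 1 - Φ ξ' 1 * Φ ξ 1 = 0 :=
  phi_one_commute_general Φ hCP hunital hcomm ρ hρ hstat
end

section
/- In the setting of the previous statement, let 1 = Σ_ν Π_ν be the joint spectral decomposition of the commuting family {Φ_{*ξ}[1]}_{ξ∈σ}, with Φ_{*ξ}[1] = Σ_ν p(ξ|ν)Π_ν. Then Φ_{*ξ}[Π_ν] = p(ξ|ν)Π_ν with p(ξ|ν) ≥ 0, for each ν the map ξ ↦ p(ξ|ν) is a probability distribution on σ, and for distinct joint-eigenvalue labels ν ≠ ν' there exists ξ with p(ξ|ν) ≠ p(ξ|ν'). -/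
open Matrix
open scoped BigOperators ComplexOrder

/-!
`T = ∑ ξ, Φ ξ` is a unital completely positive map with the faithful invariant state `ρ`. By the
Kadison–Schwarz inequality `T (Zᴴ * Z) ≥ (T Z)ᴴ * T Z` and faithfulness of `ρ`, the fixed points of
`T` are closed under `Z ↦ Zᴴ * Z`; by polarization, the `c : N → ℝ` with `∑ ν, c ν • P ν` fixed
by `T` form a subalgebra of `N → ℝ`. Since `T` commutes with every `Φ ξ`, it fixes `Φ ξ 1`, so
this subalgebra contains the point-separating functions `p ξ` and is everything: each `P ν` is
fixed by `T`. Then `0 ≤ Φ ξ (P ν) ≤ T (P ν) = P ν` confines `Φ ξ (P ν)` to the range of `P ν`,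
and compressing `Φ ξ 1 = ∑ μ, Φ ξ (P μ)` by `P ν` gives `Φ ξ (P ν) = P ν * Φ ξ 1 * P ν`,
which is `p ξ ν • P ν`.
-/

namespace Matrix

open scoped MatrixOrder in
theorem PosSemidef.nonneg_of_smul {n : Type*} {A : Matrix n n ℂ} (hA : A.PosSemidef)
    (hA0 : A ≠ 0) {c : ℝ} (hcA : (c • A).PosSemidef) : 0 ≤ c := by
  by_contra! hc
  have hneg : (-A).PosSemidef := by
    simpa [smul_smul, hc.ne] using hcA.smul (a := -c⁻¹) (by simp [hc.le])
  exact hA0 (le_antisymm (by simpa using hneg.nonneg) hA.nonneg)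

theorem posSemidef_of_conjTranspose_eq_of_mul_self_eq {n : Type*} [Fintype n]
    {Q : Matrix n n ℂ} (hQ : Qᴴ = Q) (hQQ : Q * Q = Q) : Q.PosSemidef := by
  simpa [hQ, hQQ] using posSemidef_conjTranspose_mul_self Q

section

variable {m : Type*} [Fintype m] [DecidableEq m]

open scoped MatrixOrder Matrix.Norms.L2Operator in
theorem PosDef.eq_zero_of_trace_mul_eq_zero {ρ Y : Matrix m m ℂ} (hρ : ρ.PosDef)
    (hY : Y.PosSemidef) (h : (ρ * Y).trace = 0) : Y = 0 := by
  obtain ⟨C, hC, rfl⟩ := CStarAlgebra.isStrictlyPositive_iff_eq_star_mul_self.mp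
    hρ.isStrictlyPositive
  obtain ⟨B, rfl⟩ := CStarAlgebra.nonneg_iff_eq_star_mul_self.mp hY.nonneg
  have hCB : C * Bᴴ = 0 := by
    rw [← trace_conjTranspose_mul_self_eq_zero_iff, ← h, conjTranspose_mul,
      conjTranspose_conjTranspose, Matrix.mul_assoc, trace_mul_comm]
    simp only [star_eq_conjTranspose, Matrix.mul_assoc]
  rw [hC.mul_right_eq_zero, conjTranspose_eq_zero] at hCB
  simp [hCB]

open scoped MatrixOrder Matrix.Norms.L2Operator in
theorem PosSemidef.proj_mul_mul_proj_eq {Q B : Matrix m m ℂ} (hQ : Qᴴ = Q) (hQQ : Q * Q = Q)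
    (hB : B.PosSemidef) (hBQ : (Q - B).PosSemidef) : Q * B * Q = B :=
  IsStarProjection.conjugate_of_nonneg_of_le ⟨hQQ, hQ⟩ hB.nonneg hBQ

end

end Matrix

namespace Subalgebra

variable {K N : Type*} [Field K] (A : Subalgebra K (N → K))

theorem exists_mem_apply_eq_one_apply_eq_zero (hA : (A : Set (N → K)).SeparatesPoints)
    {ν μ : N} (h : ν ≠ μ) : ∃ e ∈ A, e ν = 1 ∧ e μ = 0 := by
  obtain ⟨f, hfA, hf⟩ := hA h
  refine ⟨(f ν - f μ)⁻¹ • (f - algebraMap K _ (f μ)), ?_, ?_, ?_⟩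
  · exact A.smul_mem (A.sub_mem hfA (A.algebraMap_mem _)) _
  · simp [inv_mul_cancel₀ (sub_ne_zero.mpr hf)]
  · simp

theorem eq_top_of_separatesPoints [Fintype N] [DecidableEq N]
    (hA : (A : Set (N → K)).SeparatesPoints) : A = ⊤ := by
  choose e heA he1 he0 using fun ν μ (h : ν ≠ μ) =>
    A.exists_mem_apply_eq_one_apply_eq_zero hA h
  have hsingle : ∀ ν, Pi.single ν 1 ∈ A := by
    intro ν
    have hprod : (∏ μ, if h : ν = μ then 1 else e ν μ h) = Pi.single ν 1 := by
      ext κ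
      rw [Finset.prod_apply]
      by_cases hκ : κ = ν
      · subst hκ
        rw [Pi.single_eq_same]
        refine Finset.prod_eq_one fun μ _ => ?_
        split_ifs with h
        exacts [rfl, he1 κ μ h]
      · rw [Pi.single_eq_of_ne hκ]
        exact Finset.prod_eq_zero (Finset.mem_univ κ) (by simp [Ne.symm hκ, he0])
    rw [← hprod]
    exact A.prod_mem fun μ _ => by split_ifs with h; exacts [A.one_mem, heA ν μ h]
  refine eq_top_iff.mpr fun g _ => ?_
  rw [← Finset.univ_sum_single g]
  refine A.sum_mem fun ν _ => ?_
  simpa [← Pi.single_smul'] using A.smul_mem (hsingle ν) (g ν)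

end Subalgebra

theorem Submodule.mul_mem_of_mul_self_mem {K A : Type*} [Field K] [NeZero (2 : K)] [CommRing A]
    [Algebra K A] (S : Submodule K A) (hS : ∀ a ∈ S, a * a ∈ S) {a b : A} (ha : a ∈ S)
    (hb : b ∈ S) : a * b ∈ S := by
  have hpolar : a * b = (2 : K)⁻¹ • ((a + b) * (a + b) - a * a - b * b) := by
    rw [eq_inv_smul_iff₀ two_ne_zero, two_smul]
    ring
  rw [hpolar]
  exact S.smul_mem _ (S.sub_mem (S.sub_mem (hS _ (S.add_mem ha hb)) (hS a ha)) (hS b hb))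

namespace Fintype

variable {N m : Type*} [Fintype N] {P : N → Matrix m m ℂ}

theorem conjTranspose_linearCombination (hherm : ∀ ν, (P ν)ᴴ = P ν) (c : N → ℝ) :
    (Fintype.linearCombination ℝ P c)ᴴ = Fintype.linearCombination ℝ P c := by
  simp [Fintype.linearCombination_apply, conjTranspose_sum, hherm]

variable [DecidableEq N] [Fintype m]

theorem linearCombination_mul (horth : ∀ ν ν', P ν * P ν' = if ν = ν' then P ν else 0)
    (c d : N → ℝ) :
    Fintype.linearCombination ℝ P (c * d) =
      Fintype.linearCombination ℝ P c * Fintype.linearCombination ℝ P d := by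
  simp [Fintype.linearCombination_apply, Finset.sum_mul_sum, horth, smul_smul, mul_comm]

theorem proj_mul_linearCombination_mul_proj
    (horth : ∀ ν ν', P ν * P ν' = if ν = ν' then P ν else 0) (c : N → ℝ) (ν : N) :
    P ν * Fintype.linearCombination ℝ P c * P ν = c ν • P ν := by
  simp [Fintype.linearCombination_apply, Finset.mul_sum, horth]

end Fintype

theorem map_proj_eq_proj_mul_map_one_mul_proj {N m : Type*} [Fintype N] [DecidableEq N]
    [Fintype m] [DecidableEq m] {P : N → Matrix m m ℂ} {Ψ : Matrix m m ℂ →ₗ[ℂ] Matrix m m ℂ}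
    (hherm : ∀ ν, (P ν)ᴴ = P ν) (horth : ∀ ν ν', P ν * P ν' = if ν = ν' then P ν else 0)
    (hP1 : ∑ ν, P ν = 1) (hΨ : ∀ ν, (Ψ (P ν)).PosSemidef)
    (hΨP : ∀ ν, (P ν - Ψ (P ν)).PosSemidef) (ν : N) :
    Ψ (P ν) = P ν * Ψ 1 * P ν := by
  have hsand : ∀ μ, P μ * Ψ (P μ) * P μ = Ψ (P μ) := fun μ =>
    (hΨ μ).proj_mul_mul_proj_eq (hherm μ) (by simpa using horth μ μ) (hΨP μ)
  rw [← hP1, map_sum, Finset.mul_sum, Finset.sum_mul, Finset.sum_eq_single ν]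
  · rw [hsand]
  · intro μ _ hμν
    rw [← hsand μ, Matrix.mul_assoc, Matrix.mul_assoc, ← Matrix.mul_assoc (P ν), horth,
      ← Matrix.mul_assoc, horth, if_neg hμν.symm, if_neg hμν]
    simp
  · simp

namespace IsCompletelyPositive

variable {m : Type*} [Fintype m] [DecidableEq m] {Φ : Matrix m m ℂ →ₗ[ℂ] Matrix m m ℂ}

theorem posSemidef_blocks (hΦ : IsCompletelyPositive Φ) {n : ℕ}
    {M : Fin n → Fin n → Matrix m m ℂ}
    (hM : (Matrix.of fun p q : m × Fin n => M p.2 q.2 p.1 q.1).PosSemidef) :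
    (Matrix.of fun p q : m × Fin n => Φ (M p.2 q.2) p.1 q.1).PosSemidef :=
  hΦ n _ hM

theorem posSemidef_apply (hΦ : IsCompletelyPositive Φ) {X : Matrix m m ℂ}
    (hX : X.PosSemidef) : (Φ X).PosSemidef := by
  let e : m × Fin 1 ≃ m := Equiv.prodUnique m (Fin 1)
  exact (posSemidef_submatrix_equiv e).mp <|
    hΦ.posSemidef_blocks (M := fun _ _ => X) (hX.submatrix e)

theorem posSemidef_fromBlocks (hΦ : IsCompletelyPositive Φ) {A B C D : Matrix m m ℂ}
    (h : (fromBlocks A B C D).PosSemidef) :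
    (fromBlocks (Φ A) (Φ B) (Φ C) (Φ D)).PosSemidef := by
  let e : m × Fin 2 ≃ m ⊕ m := (Equiv.prodComm m (Fin 2)).trans
    ((finTwoEquiv.prodCongr (Equiv.refl m)).trans (Equiv.boolProdEquivSum m))
  have hblocks : ∀ F : Matrix m m ℂ → Matrix m m ℂ,
      (Matrix.of fun p q : m × Fin 2 => F (![![A, B], ![C, D]] p.2 q.2) p.1 q.1) =
        (fromBlocks (F A) (F B) (F C) (F D)).submatrix e e := by
    intro F
    ext ⟨a, i⟩ ⟨b, j⟩
    fin_cases i <;> fin_cases j <;> rfl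
  have hM := hblocks id ▸ h.submatrix e
  exact (posSemidef_submatrix_equiv e).mp (hblocks Φ ▸ hΦ.posSemidef_blocks hM)

theorem sum {ι : Type*} (s : Finset ι) {Ψ : ι → Matrix m m ℂ →ₗ[ℂ] Matrix m m ℂ}
    (hΨ : ∀ i ∈ s, IsCompletelyPositive (Ψ i)) : IsCompletelyPositive (∑ i ∈ s, Ψ i) := by
  intro n A hA
  have hsum : (Matrix.of fun p q : m × Fin n =>
      (∑ i ∈ s, Ψ i) (Matrix.of fun a b => A (a, p.2) (b, q.2)) p.1 q.1) =
      ∑ i ∈ s, Matrix.of fun p q : m × Fin n =>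
        Ψ i (Matrix.of fun a b => A (a, p.2) (b, q.2)) p.1 q.1 := by
    ext p q
    simp [Matrix.sum_apply]
  rw [hsum]
  exact posSemidef_sum s fun i hi => hΨ i hi n A hA

theorem kadison_schwarz (hΦ : IsCompletelyPositive Φ) (hΦ1 : Φ 1 = 1) (Z : Matrix m m ℂ) :
    (Φ (Zᴴ * Z) - (Φ Z)ᴴ * Φ Z).PosSemidef := by
  have hZ : (fromBlocks (Zᴴ * Z) Zᴴ Z 1).PosSemidef := by
    have h := posSemidef_conjTranspose_mul_self (fromBlocks Z 1 0 (0 : Matrix m m ℂ))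
    simpa only [fromBlocks_conjTranspose, fromBlocks_multiply, conjTranspose_zero,
      conjTranspose_one, Matrix.mul_zero, add_zero, Matrix.mul_one, Matrix.one_mul] using h
  have hΦZ := hΦ.posSemidef_fromBlocks hZ
  have hadj : Φ Zᴴ = (Φ Z)ᴴ := (isHermitian_fromBlocks_iff.mp hΦZ.isHermitian).2.2.1.symm
  have hSchur : (fromBlocks (Φ (Zᴴ * Z)) (Φ Z)ᴴ (Φ Z)ᴴᴴ 1).PosSemidef := by
    rwa [conjTranspose_conjTranspose, ← hadj, ← hΦ1]
  have : Invertible (1 : Matrix m m ℂ) := invertibleOne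
  simpa using (PosDef.fromBlocks₂₂ _ _ PosDef.one).mp hSchur

variable {T : Matrix m m ℂ →ₗ[ℂ] Matrix m m ℂ} {ρ : Matrix m m ℂ}

theorem map_conjTranspose_mul_self_of_map_eq (hT : IsCompletelyPositive T) (hT1 : T 1 = 1)
    (hρ : ρ.PosDef) (hρT : ∀ X, (ρ * T X).trace = (ρ * X).trace) {Z : Matrix m m ℂ}
    (hZ : T Z = Z) : T (Zᴴ * Z) = Zᴴ * Z := by
  have hKS := hT.kadison_schwarz hT1 Z
  rw [hZ] at hKS
  refine sub_eq_zero.mp (hρ.eq_zero_of_trace_mul_eq_zero hKS ?_)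
  rw [Matrix.mul_sub, trace_sub, hρT, sub_self]

theorem map_proj_eq_of_separatesPoints {N : Type*} [Fintype N] [DecidableEq N]
    (hT : IsCompletelyPositive T) (hT1 : T 1 = 1)
    (hρ : ρ.PosDef) (hρT : ∀ X, (ρ * T X).trace = (ρ * X).trace) {P : N → Matrix m m ℂ}
    (hherm : ∀ ν, (P ν)ᴴ = P ν) (horth : ∀ ν ν', P ν * P ν' = if ν = ν' then P ν else 0)
    (hP1 : ∑ ν, P ν = 1) {F : Set (N → ℝ)} (hF : F.SeparatesPoints)
    (hFT : ∀ f ∈ F, T (Fintype.linearCombination ℝ P f) = Fintype.linearCombination ℝ P f)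
    (ν : N) : T (P ν) = P ν := by
  let D := Fintype.linearCombination ℝ P
  let S := LinearMap.eqLocus ((T.restrictScalars ℝ).comp D) D
  have hS : ∀ c ∈ S, c * c ∈ S := by
    intro c hc
    have := hT.map_conjTranspose_mul_self_of_map_eq hT1 hρ hρT (Z := D c) hc
    rwa [Fintype.conjTranspose_linearCombination hherm, ← Fintype.linearCombination_mul horth]
      at this
  let A := S.toSubalgebra (by simpa [S, D, Fintype.linearCombination_apply, hP1] using hT1)
    fun _ _ => S.mul_mem_of_mul_self_mem hS
  have hA : A = ⊤ :=
    A.eq_top_of_separatesPoints fun _ _ h => (hF h).imp fun f ⟨hf, hne⟩ => ⟨hFT f hf, hne⟩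
  simpa [A, S, D] using (hA ▸ Algebra.mem_top : Pi.single ν 1 ∈ A)

theorem map_proj_eq_proj_mul_map_one_mul_proj {ι N : Type*} [Fintype ι] [DecidableEq ι]
    [Fintype N] [DecidableEq N] {Ψ : ι → Matrix m m ℂ →ₗ[ℂ] Matrix m m ℂ}
    (hΨ : ∀ i, IsCompletelyPositive (Ψ i)) {P : N → Matrix m m ℂ}
    (hherm : ∀ ν, (P ν)ᴴ = P ν) (horth : ∀ ν ν', P ν * P ν' = if ν = ν' then P ν else 0)
    (hP1 : ∑ ν, P ν = 1) (hfix : ∀ ν, ∑ i, Ψ i (P ν) = P ν) (i : ι) (ν : N) :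
    Ψ i (P ν) = P ν * Ψ i 1 * P ν := by
  have hP : ∀ μ, (P μ).PosSemidef := fun μ =>
    posSemidef_of_conjTranspose_eq_of_mul_self_eq (hherm μ) (by simpa using horth μ μ)
  refine _root_.map_proj_eq_proj_mul_map_one_mul_proj hherm horth hP1
    (fun μ => (hΨ i).posSemidef_apply (hP μ)) (fun μ => ?_) ν
  have := posSemidef_sum (Finset.univ.erase i) fun j _ => (hΨ j).posSemidef_apply (hP μ)
  rwa [Finset.sum_erase_eq_sub (Finset.mem_univ i), hfix] at this

end IsCompletelyPositive

theorem spectral_decomposition_of_nondemolition_general {σ N m : Type*} [Fintype σ] [Fintype N]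
    [DecidableEq N] [Fintype m] [DecidableEq m]
    (Φ : σ → (Matrix m m ℂ →ₗ[ℂ] Matrix m m ℂ))
    (hCP : ∀ ξ, IsCompletelyPositive (Φ ξ))
    (hunital : ∑ ξ, Φ ξ 1 = 1)
    (hcomm : ∀ ξ ξ', (Φ ξ).comp (Φ ξ') = (Φ ξ').comp (Φ ξ))
    (ρ : Matrix m m ℂ) (hρ : ρ.PosDef)
    (hstat : ∀ X : Matrix m m ℂ, (ρ * (∑ ξ, Φ ξ X)).trace = (ρ * X).trace)
    (P : N → Matrix m m ℂ) (p : σ → N → ℝ)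
    (hherm : ∀ ν, (P ν)ᴴ = P ν)
    (horth : ∀ ν ν', P ν * P ν' = if ν = ν' then P ν else 0)
    (hP1 : ∑ ν, P ν = 1) (hPne : ∀ ν, P ν ≠ 0)
    (hspec : ∀ ξ, Φ ξ 1 = ∑ ν, (p ξ ν : ℂ) • P ν)
    (hjoint : ∀ ν ν', (∀ ξ, p ξ ν = p ξ ν') → ν = ν') :
    (∀ ξ ν, Φ ξ (P ν) = (p ξ ν : ℂ) • P ν) ∧
    (∀ ξ ν, 0 ≤ p ξ ν) ∧
    (∀ ν, ∑ ξ, p ξ ν = 1) ∧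
    (∀ ν ν', ν ≠ ν' → ∃ ξ, p ξ ν ≠ p ξ ν') := by
  classical
  let T := ∑ ξ, Φ ξ
  have hT_apply : ∀ X, T X = ∑ ξ, Φ ξ X := LinearMap.sum_apply _ _
  have hT1 : T 1 = 1 := (hT_apply 1).trans hunital
  have hspec' : ∀ ξ, Φ ξ 1 = Fintype.linearCombination ℝ P (p ξ) := fun ξ => by
    simp [hspec, Fintype.linearCombination_apply, Complex.coe_smul]
  have hdistinct : ∀ ν ν', ν ≠ ν' → ∃ ξ, p ξ ν ≠ p ξ ν' := fun ν ν' h =>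
    not_forall.mp (mt (hjoint ν ν') h)
  have hT_fix : ∀ ξ, T (Φ ξ 1) = Φ ξ 1 := fun ξ => by
    have hTΦ : Commute T (Φ ξ) := Commute.sum_left _ _ _ fun ξ' _ => hcomm ξ' ξ
    rw [← Module.End.mul_apply, hTΦ.eq, Module.End.mul_apply, hT1]
  have hTP : ∀ ν, T (P ν) = P ν :=
    (IsCompletelyPositive.sum _ fun ξ _ => hCP ξ).map_proj_eq_of_separatesPoints hT1 hρ
      (fun X => by rw [hT_apply]; exact hstat X) hherm horth hP1
      (fun ν ν' h => Set.exists_range_iff.mpr (hdistinct ν ν' h))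
      (Set.forall_mem_range.mpr fun ξ => hspec' ξ ▸ hT_fix ξ)
  have hmain : ∀ ξ ν, Φ ξ (P ν) = (p ξ ν : ℂ) • P ν := fun ξ ν => by
    rw [IsCompletelyPositive.map_proj_eq_proj_mul_map_one_mul_proj hCP hherm horth hP1
        (fun μ => (hT_apply _).symm.trans (hTP μ)), hspec',
      Fintype.proj_mul_linearCombination_mul_proj horth, Complex.coe_smul]
  have hP : ∀ ν, (P ν).PosSemidef := fun ν =>
    posSemidef_of_conjTranspose_eq_of_mul_self_eq (hherm ν) (by simpa using horth ν ν)
  refine ⟨hmain, fun ξ ν => ?_, fun ν => ?_, hdistinct⟩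
  · refine (hP ν).nonneg_of_smul (hPne ν) ?_
    simpa [hmain, Complex.coe_smul] using (hCP ξ).posSemidef_apply (hP ν)
  · refine smul_left_injective ℝ (hPne ν) ?_
    simpa [Finset.sum_smul, ← Complex.coe_smul, ← hmain, ← hT_apply] using hTP ν

/-- in the setting of Statement 14, let `1 = ∑_ν P_ν` be the joint spectral
decomposition of the commuting family `{Φ_{*ξ}[1]}`, with `Φ_{*ξ}[1] = ∑_ν p(ξ|ν) P_ν`
(distinct labels carrying distinct joint eigenvalue vectors). Then
`Φ_{*ξ}[P_ν] = p(ξ|ν) P_ν` with `p(ξ|ν) ≥ 0`, for each `ν` the map `ξ ↦ p(ξ|ν)` is a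
probability distribution on `σ`, and for `ν ≠ ν'` there is `ξ` with `p(ξ|ν) ≠ p(ξ|ν')`. -/
theorem spectral_decomposition_of_nondemolition {σ N m : Type*} [Fintype σ] [Fintype N]
    [DecidableEq N] [Fintype m] [DecidableEq m]
    (Φ : σ → (Matrix m m ℂ →ₗ[ℂ] Matrix m m ℂ))
    (hCP : ∀ ξ, IsCompletelyPositive (Φ ξ))
    (hunital : ∑ ξ, Φ ξ 1 = 1)
    (hcomm : ∀ ξ ξ', (Φ ξ).comp (Φ ξ') = (Φ ξ').comp (Φ ξ))
    (ρ : Matrix m m ℂ) (hρ : ρ.PosDef) (hρ1 : ρ.trace = 1)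
    (hstat : ∀ X : Matrix m m ℂ, (ρ * (∑ ξ, Φ ξ X)).trace = (ρ * X).trace)
    (P : N → Matrix m m ℂ) (p : σ → N → ℝ)
    (hherm : ∀ ν, (P ν)ᴴ = P ν)
    (horth : ∀ ν ν', P ν * P ν' = if ν = ν' then P ν else 0)
    (hP1 : ∑ ν, P ν = 1) (hPne : ∀ ν, P ν ≠ 0)
    (hspec : ∀ ξ, Φ ξ 1 = ∑ ν, (p ξ ν : ℂ) • P ν)
    (hjoint : ∀ ν ν', (∀ ξ, p ξ ν = p ξ ν') → ν = ν') :
    (∀ ξ ν, Φ ξ (P ν) = (p ξ ν : ℂ) • P ν) ∧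
    (∀ ξ ν, 0 ≤ p ξ ν) ∧
    (∀ ν, ∑ ξ, p ξ ν = 1) ∧
    (∀ ν ν', ν ≠ ν' → ∃ ξ, p ξ ν ≠ p ξ ν') :=
  spectral_decomposition_of_nondemolition_general Φ hCP hunital hcomm ρ hρ hstat P p hherm horth hP1
    hPne hspec hjoint
end
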